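/- arXiv:1911.03279 — 11 statements merged into one kernel-verified Lean document; each statement's English description precedes it below -/
import Mathlib

section
/- Let G be a group (possibly infinite) whose central quotient G/Z(G) has order pqr, where p, q, r are primes (not necessarily distinct). Then for every x in G not in Z(G), the centralizer C_G(x) is abelian. -/
/-!
Let `C = C_G(x)`. Both `Z(G)` and `x` lie in `Z(C)`, so
`[G : Z(G)] = [Z(C) : Z(G)] · [C : Z(C)] · [G : C]` with the outer factors different from `1`
(`x ∈ Z(C) \ Z(G)`, and `C ≠ G` because `x` is not central). As `[G : Z(G)]` has only three
prime factors, `[C : Z(C)]` is `1` or a prime, so `C / Z(C)` is cyclic and `C` is abelian.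
-/

open Subgroup ArithmeticFunction
open scoped ArithmeticFunction.Omega

namespace Nat

lemma eq_one_or_prime_of_cardFactors_le_one {m : ℕ} (hm : m ≠ 0) (h : Ω m ≤ 1) :
    m = 1 ∨ m.Prime := by
  interval_cases hΩ : Ω m
  · exact .inl ((cardFactors_eq_zero_iff_eq_zero_or_one.mp hΩ).resolve_left hm)
  · exact .inr (cardFactors_eq_one_iff_prime.mp hΩ)

lemma eq_one_or_prime_of_cardFactors_mul_mul_le_three {a m c : ℕ} (h0 : a * m * c ≠ 0)
    (h3 : Ω (a * m * c) ≤ 3) (ha : a ≠ 1) (hc : c ≠ 1) : m = 1 ∨ m.Prime := by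
  obtain ⟨ham0, hc0⟩ := _root_.mul_ne_zero_iff.mp h0
  obtain ⟨ha0, hm0⟩ := _root_.mul_ne_zero_iff.mp ham0
  have hΩa : 0 < Ω a := cardFactors_pos_iff_one_lt.mpr (by omega)
  have hΩc : 0 < Ω c := cardFactors_pos_iff_one_lt.mpr (by omega)
  rw [cardFactors_mul (mul_ne_zero ha0 hm0) hc0, cardFactors_mul ha0 hm0] at h3
  exact eq_one_or_prime_of_cardFactors_le_one hm0 (by omega)

lemma cardFactors_mul_mul_of_prime {p q r : ℕ} (hp : p.Prime) (hq : q.Prime) (hr : r.Prime) :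
    Ω (p * q * r) = 3 := by
  rw [cardFactors_mul (mul_ne_zero hp.ne_zero hq.ne_zero) hr.ne_zero,
    cardFactors_mul hp.ne_zero hq.ne_zero, cardFactors_apply_prime hp,
    cardFactors_apply_prime hq, cardFactors_apply_prime hr]

end Nat

namespace Subgroup

variable {G : Type*} [Group G]

lemma isMulCommutative_of_index_center_eq_one_or_prime
    (h : (center G).index = 1 ∨ (center G).index.Prime) : IsMulCommutative G := by
  have : IsCyclic (G ⧸ center G) := by
    rcases h with h1 | hprime
    · have := (Nat.card_eq_one_iff_unique.mp h1).1
      infer_instance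
    · have : Fact (center G).index.Prime := ⟨hprime⟩
      exact isCyclic_of_prime_card (p := (center G).index) rfl
  exact (QuotientGroup.mk' (center G)).isMulCommutative_of_isCyclic_of_ker_le_center
    (QuotientGroup.ker_mk' _).le

lemma center_subgroupOf_le_center (H : Subgroup G) : (center G).subgroupOf H ≤ center H :=
  fun _ hg => mem_center_iff.mpr fun h => Subtype.ext (mem_center_iff.mp (mem_subgroupOf.mp hg) h)

lemma index_center_eq_mul_mul {H : Subgroup G} (hH : center G ≤ H) :
    (center G).index =
      ((center G).subgroupOf H).relIndex (center H) * (center H).index * H.index := by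
  rw [relIndex_mul_index (center_subgroupOf_le_center H), ← relIndex, relIndex_mul_index hH]

lemma index_centralizer_singleton_ne_one {x : G} (hx : x ∉ center G) :
    (centralizer {x}).index ≠ 1 := by
  rw [Ne, index_eq_one, centralizer_eq_top_iff_subset, Set.singleton_subset_iff]
  exact hx

lemma relIndex_center_centralizer_singleton_ne_one {x : G} (hx : x ∉ center G) :
    ((center G).subgroupOf (centralizer {x})).relIndex (center (centralizer {x})) ≠ 1 := by
  have hxC : x ∈ centralizer {x} := mem_centralizer_singleton_iff.mpr rfl
  have hxZ : (⟨x, hxC⟩ : centralizer {x}) ∈ center (centralizer {x}) :=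
    mem_center_iff.mpr fun g => Subtype.ext (mem_centralizer_singleton_iff.mp g.2)
  exact fun h1 => hx (mem_subgroupOf.mp (relIndex_eq_one.mp h1 hxZ))

theorem isMulCommutative_centralizer_of_cardFactors_index_center_le_three
    (h0 : (center G).index ≠ 0) (h3 : Ω (center G).index ≤ 3) {x : G} (hx : x ∉ center G) :
    IsMulCommutative (centralizer {x}) := by
  rw [index_center_eq_mul_mul (center_le_centralizer {x})] at h0 h3
  exact isMulCommutative_of_index_center_eq_one_or_prime
    (Nat.eq_one_or_prime_of_cardFactors_mul_mul_le_three h0 h3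
      (relIndex_center_centralizer_singleton_ne_one hx) (index_centralizer_singleton_ne_one hx))

end Subgroup

theorem centralizer_abelian_of_card_central_quotient_eq_pqr
    (G : Type*) [Group G] (p q r : ℕ)
    (hp : p.Prime) (hq : q.Prime) (hr : r.Prime)
    (h : Nat.card (G ⧸ Subgroup.center G) = p * q * r)
    (x : G) (hx : x ∉ Subgroup.center G) :
    ∀ a ∈ Subgroup.centralizer ({x} : Set G),
      ∀ b ∈ Subgroup.centralizer ({x} : Set G), a * b = b * a := by
  have hindex : (center G).index = p * q * r := h
  have := isMulCommutative_centralizer_of_cardFactors_index_center_le_three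
    (hindex ▸ mul_ne_zero (mul_ne_zero hp.ne_zero hq.ne_zero) hr.ne_zero)
    (hindex ▸ (Nat.cardFactors_mul_mul_of_prime hp hq hr).le) hx
  intro a ha b hb
  exact congrArg Subtype.val (mul_comm' (⟨a, ha⟩ : centralizer {x}) ⟨b, hb⟩)
end

section
/- Let G be a group whose central quotient G/Z(G) has order pqr for primes p, q, r (not necessarily distinct). Then any two distinct proper element centralizers of G intersect exactly in Z(G). -/
/-!
Let `x` be non-central and `H = C_G(x)`. The subgroup `N = Z(G)⟨x⟩` lies in `H` and centralizes it,
and `|G : Z(G)| = |N : Z(G)| |H : N| |G : H|` with the outer two factors `≠ 1`. Hence `|H : N|` is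
`1` or a prime, so `H / Z(H)` is cyclic and `H` is abelian. An abelian centralizer `C_G(x)` is
contained in `C_G(z)` for each of its elements `z`; so a non-central `z ∈ C_G(x) ∩ C_G(y)` would
force `C_G(x) = C_G(z) = C_G(y)`.
-/

open Subgroup ArithmeticFunction
open scoped ArithmeticFunction.Omega

namespace ArithmeticFunction

theorem cardFactors_le_of_dvd {m n : ℕ} (hn : n ≠ 0) (h : m ∣ n) : Ω m ≤ Ω n := by
  obtain ⟨k, rfl⟩ := h
  rw [cardFactors_mul (left_ne_zero_of_mul hn) (right_ne_zero_of_mul hn)]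
  exact Nat.le_add_right _ _

theorem cardFactors_add_two_le_mul_mul {a b c : ℕ} (h0 : a * b * c ≠ 0) (ha : a ≠ 1)
    (hc : c ≠ 1) : Ω b + 2 ≤ Ω (a * b * c) := by
  have hab := left_ne_zero_of_mul h0
  rw [cardFactors_mul hab (right_ne_zero_of_mul h0),
    cardFactors_mul (left_ne_zero_of_mul hab) (right_ne_zero_of_mul hab)]
  have hΩa : 0 < Ω a := cardFactors_pos_iff_one_lt.mpr <| by
    have := left_ne_zero_of_mul hab
    omega
  have hΩc : 0 < Ω c := cardFactors_pos_iff_one_lt.mpr <| by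
    have := right_ne_zero_of_mul h0
    omega
  omega

end ArithmeticFunction

theorem isCyclic_of_cardFactors_card_le_one {G : Type*} [Group G] (h0 : Nat.card G ≠ 0)
    (h : Ω (Nat.card G) ≤ 1) : IsCyclic G := by
  rcases Nat.le_one_iff_eq_zero_or_eq_one.mp h with h | h
  · have : Subsingleton G := by
      rcases cardFactors_eq_zero_iff_eq_zero_or_one.mp h with h | h
      · exact absurd h h0
      · exact (Nat.card_eq_one_iff_unique.mp h).1
    exact isCyclic_of_subsingleton
  · have : Fact (Nat.card G).Prime := ⟨cardFactors_eq_one_iff_prime.mp h⟩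
    exact isCyclic_of_prime_card rfl

namespace Subgroup

variable {G : Type*} [Group G]

theorem isMulCommutative_of_le_centralizer_of_cardFactors_relIndex_le_one {K H : Subgroup G}
    (hK : K ≤ centralizer H) (h0 : K.relIndex H ≠ 0) (h : Ω (K.relIndex H) ≤ 1) :
    IsMulCommutative H := by
  have hKZ : K.subgroupOf H ≤ center H := fun k hk =>
    mem_center_iff.mpr fun g => Subtype.ext (hK hk g g.2)
  have hdvd : (center H).index ∣ K.relIndex H := index_dvd_of_le hKZ
  have : IsCyclic (H ⧸ center H) :=
    isCyclic_of_cardFactors_card_le_one (Nat.pos_of_dvd_of_pos hdvd (Nat.pos_of_ne_zero h0)).ne'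
      ((cardFactors_le_of_dvd h0 hdvd).trans h)
  exact isMulCommutative_of_isCyclic_quotient_center_self H

theorem isMulCommutative_centralizer_singleton {x : G} (hx : x ∉ center G)
    (h0 : (center G).index ≠ 0) (h : Ω (center G).index ≤ 3) :
    IsMulCommutative (centralizer {x}) := by
  set H := centralizer ({x} : Set G)
  set N := center G ⊔ zpowers x
  have hxH : x ∈ H := mem_centralizer_singleton_iff.mpr rfl
  have hxN : x ∈ N := mem_sup_right (mem_zpowers x)
  have hZN : center G ≤ N := le_sup_left
  have hNH : N ≤ H := sup_le (center_le_centralizer _) (zpowers_le.mpr hxH)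
  have hNC : N ≤ centralizer H :=
    sup_le (center_le_centralizer _)
      (zpowers_le.mpr fun _ hg => mem_centralizer_singleton_iff.mp hg)
  have hchain : (center G).relIndex N * N.relIndex H * H.index = (center G).index := by
    rw [mul_assoc, relIndex_mul_index hNH, relIndex_mul_index hZN]
  have hZN1 : (center G).relIndex N ≠ 1 := fun h1 => hx (relIndex_eq_one.mp h1 hxN)
  have hH1 : H.index ≠ 1 := fun h1 =>
    hx (Set.singleton_subset_iff.mp (centralizer_eq_top_iff_subset.mp (index_eq_one.mp h1)))
  rw [← hchain] at h0 h
  have := cardFactors_add_two_le_mul_mul h0 hZN1 hH1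
  exact isMulCommutative_of_le_centralizer_of_cardFactors_relIndex_le_one hNC
    (right_ne_zero_of_mul (left_ne_zero_of_mul h0)) (by omega)

theorem centralizer_singleton_le_of_mem {u v : G} [IsMulCommutative (centralizer {u})]
    (hv : v ∈ centralizer {u}) : centralizer {u} ≤ centralizer {v} :=
  (le_centralizer _).trans (centralizer_le (Set.singleton_subset_iff.mpr hv))

theorem centralizer_singleton_eq_of_mem {u v : G} [IsMulCommutative (centralizer {u})]
    [IsMulCommutative (centralizer {v})] (hv : v ∈ centralizer {u}) :
    centralizer {u} = centralizer {v} :=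
  (centralizer_singleton_le_of_mem hv).antisymm <| centralizer_singleton_le_of_mem <|
    mem_centralizer_singleton_iff.mpr (mem_centralizer_singleton_iff.mp hv).symm

end Subgroup

theorem distinct_centralizers_inter_eq_center
    (G : Type*) [Group G] (p q r : ℕ)
    (hp : p.Prime) (hq : q.Prime) (hr : r.Prime)
    (h : Nat.card (G ⧸ Subgroup.center G) = p * q * r)
    (x y : G) (hx : x ∉ Subgroup.center G) (hy : y ∉ Subgroup.center G)
    (hne : Subgroup.centralizer ({x} : Set G) ≠ Subgroup.centralizer ({y} : Set G)) :
    Subgroup.centralizer ({x} : Set G) ⊓ Subgroup.centralizer ({y} : Set G)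
      = Subgroup.center G := by
  have h0 : (center G).index ≠ 0 := by
    rw [index, h]
    exact mul_ne_zero (mul_ne_zero hp.ne_zero hq.ne_zero) hr.ne_zero
  have hΩ : Ω (center G).index ≤ 3 := by
    rw [index, h, cardFactors_mul (mul_ne_zero hp.ne_zero hq.ne_zero) hr.ne_zero,
      cardFactors_mul hp.ne_zero hq.ne_zero, cardFactors_apply_prime hp, cardFactors_apply_prime hq,
      cardFactors_apply_prime hr]
  have hcomm {w : G} (hw : w ∉ center G) : IsMulCommutative (centralizer {w}) :=
    isMulCommutative_centralizer_singleton hw h0 hΩ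
  refine le_antisymm (fun z ⟨hzx, hzy⟩ => ?_)
    (le_inf (center_le_centralizer _) (center_le_centralizer _))
  by_contra hz
  have := hcomm hx
  have := hcomm hy
  have := hcomm hz
  exact hne ((centralizer_singleton_eq_of_mem hzx).trans (centralizer_singleton_eq_of_mem hzy).symm)
end

section
/- A group G of order pqr, with p < q < r primes, is capable (i.e., isomorphic to H/Z(H) for some group H) if and only if Z(G) is trivial. -/
def Capable (G : Type*) [Group G] : Prop :=
  ∃ (H : Type) (_ : Group H), Nonempty (G ≃* H ⧸ Subgroup.center H)

theorem capable_of_order_pqr_iff_center_trivial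
    (G : Type*) [Group G] (p q r : ℕ)
    (hp : p.Prime) (hq : q.Prime) (hr : r.Prime)
    (hpq : p < q) (hqr : q < r)
    (hcard : Nat.card G = p * q * r) :
    Capable G ↔ Subgroup.center G = ⊥ := by
  have hpqr0 : p * q * r ≠ 0 :=
    (Nat.mul_pos (Nat.mul_pos hp.pos hq.pos) hr.pos).ne'
  have hGfin : Finite G := Nat.finite_of_card_ne_zero (by rw [hcard]; exact hpqr0)
  constructor
  · rintro ⟨H, _, ⟨e⟩⟩
    set π : H →* G := (e.symm : H ⧸ Subgroup.center H ≃* G).toMonoidHom.comp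
      (QuotientGroup.mk' (Subgroup.center H)) with hπdef
    have hπsurj : Function.Surjective π :=
      e.symm.surjective.comp (QuotientGroup.mk'_surjective _)
    have hker : ∀ y : H, π y = 1 ↔ y ∈ Subgroup.center H := by
      intro y
      have hrw : π y = e.symm (y : H ⧸ Subgroup.center H) := rfl
      rw [hrw]
      constructor
      · intro hy
        have h2 : ((y : H) : H ⧸ Subgroup.center H) = 1 := by
          apply e.symm.injective
          rw [map_one]
          exact hy
        exact (QuotientGroup.eq_one_iff y).mp h2
      · intro hy
        have h2 : ((y : H) : H ⧸ Subgroup.center H) = 1 :=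
          (QuotientGroup.eq_one_iff y).mpr hy
        rw [h2, map_one]
    rw [Subgroup.eq_bot_iff_forall]
    intro x hx
    obtain ⟨h, hh⟩ := hπsurj x
    set s := orderOf x with hs
    -- the commutator with h lands in the center of H
    have hcent : ∀ y : H, h * y * h⁻¹ * y⁻¹ ∈ Subgroup.center H := by
      intro y
      rw [← hker]
      have h1 : π (h * y * h⁻¹ * y⁻¹) = x * π y * x⁻¹ * (π y)⁻¹ := by
        simp [hh]
      rw [h1]
      have h2 := Subgroup.mem_center_iff.mp hx (π y)
      rw [← h2]
      group
    have hconj : ∀ y : H, h * y * h⁻¹ = (h * y * h⁻¹ * y⁻¹) * y := by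
      intro y; group
    -- power law
    have hpow : ∀ (y : H) (n : ℕ),
        (h * y * h⁻¹ * y⁻¹) ^ n = h * y ^ n * h⁻¹ * (y ^ n)⁻¹ := by
      intro y n
      have hc : Commute (h * y * h⁻¹ * y⁻¹) y :=
        (Subgroup.mem_center_iff.mp (hcent y) y).symm
      calc (h * y * h⁻¹ * y⁻¹) ^ n
          = (h * y * h⁻¹ * y⁻¹) ^ n * y ^ n * (y ^ n)⁻¹ :=
            (mul_inv_cancel_right _ _).symm
        _ = ((h * y * h⁻¹ * y⁻¹) * y) ^ n * (y ^ n)⁻¹ := by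
            rw [hc.mul_pow]
        _ = (h * y * h⁻¹) ^ n * (y ^ n)⁻¹ := by rw [← hconj y]
        _ = h * y ^ n * h⁻¹ * (y ^ n)⁻¹ := by rw [conj_pow]
    -- power law in h
    have hpow2 : ∀ (y : H) (n : ℕ),
        h ^ n * y * (h ^ n)⁻¹ = (h * y * h⁻¹ * y⁻¹) ^ n * y := by
      intro y n
      induction n with
      | zero => simp
      | succ n ih =>
        have hcn : Commute h ((h * y * h⁻¹ * y⁻¹) ^ n) :=
          Commute.pow_right (Subgroup.mem_center_iff.mp (hcent y) h) n
        calc h ^ (n+1) * y * (h ^ (n+1))⁻¹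
            = h * (h ^ n * y * (h ^ n)⁻¹) * h⁻¹ := by group
          _ = h * ((h * y * h⁻¹ * y⁻¹) ^ n * y) * h⁻¹ := by rw [ih]
          _ = h * (h * y * h⁻¹ * y⁻¹) ^ n * (y * h⁻¹) := by group
          _ = (h * y * h⁻¹ * y⁻¹) ^ n * h * (y * h⁻¹) := by rw [hcn.eq]
          _ = (h * y * h⁻¹ * y⁻¹) ^ n * (h * y * h⁻¹) := by group
          _ = (h * y * h⁻¹ * y⁻¹) ^ n * ((h * y * h⁻¹ * y⁻¹) * y) := by
              rw [← hconj y]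
          _ = (h * y * h⁻¹ * y⁻¹) ^ (n+1) * y := by rw [pow_succ]; group
    -- c ^ s = 1
    have hcs : ∀ y : H, (h * y * h⁻¹ * y⁻¹) ^ s = 1 := by
      intro y
      have hhs : h ^ s ∈ Subgroup.center H := by
        rw [← hker]
        have h1 : π (h ^ s) = x ^ s := by simp [hh]
        rw [h1, hs, pow_orderOf_eq_one]
      have h3 : h ^ s * y * (h ^ s)⁻¹ = y := by
        have h4 := Subgroup.mem_center_iff.mp hhs y
        calc h ^ s * y * (h ^ s)⁻¹ = y * h ^ s * (h ^ s)⁻¹ := by rw [h4]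
          _ = y := mul_inv_cancel_right _ _
      have h5 : (h * y * h⁻¹ * y⁻¹) ^ s * y = y := by rw [← hpow2, h3]
      calc (h * y * h⁻¹ * y⁻¹) ^ s
          = (h * y * h⁻¹ * y⁻¹) ^ s * y * y⁻¹ := (mul_inv_cancel_right _ _).symm
        _ = y * y⁻¹ := by rw [h5]
        _ = 1 := mul_inv_cancel y
    -- c ^ orderOf (π y) = 1
    have hcm : ∀ y : H, (h * y * h⁻¹ * y⁻¹) ^ (orderOf (π y)) = 1 := by
      intro y
      have hym : y ^ (orderOf (π y)) ∈ Subgroup.center H := by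
        rw [← hker]
        simp [pow_orderOf_eq_one]
      rw [hpow]
      have h1 := Subgroup.mem_center_iff.mp hym h
      rw [h1]
      group
    -- coprime order elements commute with h
    have hcoprime : ∀ y : H, Nat.Coprime (orderOf (π y)) s → h * y = y * h := by
      intro y hco
      have hd1 : orderOf (h * y * h⁻¹ * y⁻¹) ∣ s := orderOf_dvd_of_pow_eq_one (hcs y)
      have hd2 : orderOf (h * y * h⁻¹ * y⁻¹) ∣ orderOf (π y) :=
        orderOf_dvd_of_pow_eq_one (hcm y)
      have hd : orderOf (h * y * h⁻¹ * y⁻¹) ∣ 1 := by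
        rw [← hco]; exact Nat.dvd_gcd hd2 hd1
      have h1 : h * y * h⁻¹ * y⁻¹ = 1 :=
        orderOf_eq_one_iff.mp (Nat.eq_one_of_dvd_one hd)
      calc h * y = (h * y * h⁻¹ * y⁻¹) * (y * h) := by group
        _ = 1 * (y * h) := by rw [h1]
        _ = y * h := one_mul _
    set T : Subgroup G := (Subgroup.centralizer {h}).map π with hT
    have hxT : x ∈ T := by
      refine Subgroup.mem_map.mpr ⟨h, ?_, hh⟩
      rw [Subgroup.mem_centralizer_iff]
      rintro g hg
      rw [Set.mem_singleton_iff] at hg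
      subst hg
      rfl
    have hgT : ∀ g : G, Nat.Coprime (orderOf g) s → g ∈ T := by
      intro g hg
      obtain ⟨y, hy⟩ := hπsurj g
      refine Subgroup.mem_map.mpr ⟨y, ?_, hy⟩
      rw [Subgroup.mem_centralizer_iff]
      rintro w hw
      rw [Set.mem_singleton_iff] at hw
      subst hw
      exact hcoprime y (by rwa [hy])
    -- each of p, q, r divides card T
    have hdvdT : ∀ t : ℕ, t.Prime → t ∣ p * q * r → t ∣ Nat.card T := by
      intro t ht htd
      by_cases hts : t ∣ s
      · exact hts.trans (T.orderOf_dvd_natCard hxT)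
      · haveI : Fact t.Prime := ⟨ht⟩
        obtain ⟨g, hg⟩ := exists_prime_orderOf_dvd_card' (G := G) t (by rwa [hcard])
        have hgmem : g ∈ T := hgT g
          (by rw [hg]; exact (Nat.Prime.coprime_iff_not_dvd ht).mpr hts)
        have := T.orderOf_dvd_natCard hgmem
        rwa [hg] at this
    have hpq' : p ≠ q := Nat.ne_of_lt hpq
    have hpr' : p ≠ r := Nat.ne_of_lt (hpq.trans hqr)
    have hqr' : q ≠ r := Nat.ne_of_lt hqr
    have hdp : p ∣ Nat.card T := hdvdT p hp ⟨q * r, by ring⟩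
    have hdq : q ∣ Nat.card T := hdvdT q hq ⟨p * r, by ring⟩
    have hdr : r ∣ Nat.card T := hdvdT r hr ⟨p * q, by ring⟩
    have hdpq : p * q ∣ Nat.card T :=
      ((Nat.coprime_primes hp hq).mpr hpq').mul_dvd_of_dvd_of_dvd hdp hdq
    have hdpqr : p * q * r ∣ Nat.card T :=
      (Nat.Coprime.mul ((Nat.coprime_primes hp hr).mpr hpr')
        ((Nat.coprime_primes hq hr).mpr hqr')).mul_dvd_of_dvd_of_dvd hdpq hdr
    have hTle : Nat.card T ∣ p * q * r := by
      rw [← hcard]; exact Subgroup.card_subgroup_dvd_card T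
    have hTcard : Nat.card T = Nat.card G := by
      rw [hcard]; exact Nat.dvd_antisymm hTle hdpqr
    have hTtop : T = ⊤ := Subgroup.eq_top_of_card_eq T hTcard
    -- h is central, so x = 1
    have hhc : h ∈ Subgroup.center H := by
      rw [Subgroup.mem_center_iff]
      intro y
      have hyT : π y ∈ T := hTtop ▸ Subgroup.mem_top (π y)
      obtain ⟨k, hk, hky⟩ := Subgroup.mem_map.mp hyT
      have hz : k⁻¹ * y ∈ Subgroup.center H := by
        rw [← hker]
        simp [hky]
      have hkh : h * k = k * h :=
        Subgroup.mem_centralizer_iff.mp hk h rfl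
      calc y * h = k * (k⁻¹ * y) * h := by group
        _ = k * (h * (k⁻¹ * y)) := by
            rw [mul_assoc, ← Subgroup.mem_center_iff.mp hz h]
        _ = (k * h) * (k⁻¹ * y) := by group
        _ = (h * k) * (k⁻¹ * y) := by rw [hkh]
        _ = h * y := by group
    rw [← hh]
    exact (hker h).mpr hhc
  · intro hZ
    have hsmall : Small.{0} G := by infer_instance
    refine ⟨Shrink.{0} G, inferInstance, ⟨?_⟩⟩
    let eG : G ≃* Shrink.{0} G :=
      MulEquiv.mk' (equivShrink G) (fun a b => equivShrink_mul a b)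
    have hcZ : Subgroup.center (Shrink.{0} G) = ⊥ := by
      rw [Subgroup.eq_bot_iff_forall]
      intro z hz
      have hz' : eG.symm z ∈ Subgroup.center G := by
        rw [Subgroup.mem_center_iff]
        intro g
        apply eG.injective
        rw [map_mul, map_mul, eG.apply_symm_apply]
        exact Subgroup.mem_center_iff.mp hz (eG g)
      rw [hZ, Subgroup.mem_bot] at hz'
      calc z = eG (eG.symm z) := (eG.apply_symm_apply z).symm
        _ = eG 1 := by rw [hz']
        _ = 1 := map_one eG
    exact eG.trans
      ((QuotientGroup.quotientBot (G := Shrink.{0} G)).symm.trans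
        (QuotientGroup.quotientMulEquivOfEq hcZ).symm)
end

section
/- If G is a finite group with |G/Z(G)| = pqr for primes p < q < r, then G is a primitive n-centralizer group, i.e., |Cent(G)| = |Cent(G/Z(G))|. -/
def Cent (G : Type*) [Group G] : Set (Subgroup G) :=
  {H | ∃ x : G, H = Subgroup.centralizer {x}}

/-! If `G ⧸ Z(G)` has squarefree order, every Sylow subgroup of it is cyclic, so any two commuting
elements of `G ⧸ Z(G)` generate a cyclic subgroup; its preimage in `G` is cyclic modulo central
elements, hence abelian. Thus `x` and `y` commute in `G` as soon as their images commute, i.e.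
`C_G(x)` is the full preimage of `C_{G/Z}(xZ)`, and taking preimages is a bijection
`Cent(G/Z) ≃ Cent(G)`. -/

open Subgroup QuotientGroup

section CentralQuotient

variable {G : Type*} [Group G]

theorem isMulCommutative_comap_mk_center (K : Subgroup (G ⧸ center G)) [IsCyclic K] :
    IsMulCommutative (K.comap (mk' (center G))) :=
  ((mk' (center G)).subgroupComap K).isMulCommutative_of_isCyclic_of_ker_le_center
    fun g hg ↦ by
      have hg' : (g : G) ∈ center G :=
        (eq_one_iff (g : G)).mp (congrArg Subtype.val (MonoidHom.mem_ker.mp hg))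
      exact mem_center_iff.mpr fun k ↦ Subtype.ext (mem_center_iff.mp hg' k)

variable [Finite (G ⧸ center G)] [IsZGroup (G ⧸ center G)]

open scoped IsMulCommutative in
theorem commute_of_commute_mk {x y : G} (h : Commute (x : G ⧸ center G) y) : Commute x y := by
  set K := closure {(x : G ⧸ center G), (y : G ⧸ center G)}
  have : IsMulCommutative K := isMulCommutative_closure <| by
    rintro a (rfl | rfl) b (rfl | rfl) <;> first | rfl | exact h.eq | exact h.symm.eq
  have : IsCyclic K := inferInstance
  have := isMulCommutative_comap_mk_center K
  have hx : x ∈ K.comap (mk' (center G)) := subset_closure (by simp)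
  have hy : y ∈ K.comap (mk' (center G)) := subset_closure (by simp)
  exact congrArg Subtype.val (mul_comm' (⟨x, hx⟩ : K.comap (mk' (center G))) ⟨y, hy⟩)

theorem centralizer_singleton_eq_comap_mk (x : G) :
    centralizer {x} = (centralizer {(x : G ⧸ center G)}).comap (mk' (center G)) := by
  ext y
  simp only [mem_comap, mem_centralizer_singleton_iff, mk'_apply]
  exact ⟨fun h ↦ by rw [← QuotientGroup.mk_mul, h, QuotientGroup.mk_mul],
    fun h ↦ commute_of_commute_mk h⟩

theorem cent_eq_image_comap_mk :
    Cent G = comap (mk' (center G)) '' Cent (G ⧸ center G) := by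
  ext H
  constructor
  · rintro ⟨x, rfl⟩
    exact ⟨_, ⟨x, rfl⟩, (centralizer_singleton_eq_comap_mk x).symm⟩
  · rintro ⟨_, ⟨y, rfl⟩, rfl⟩
    obtain ⟨x, rfl⟩ := mk_surjective y
    exact ⟨x, (centralizer_singleton_eq_comap_mk x).symm⟩

theorem ncard_cent_eq_ncard_cent_quotient_center :
    (Cent G).ncard = (Cent (G ⧸ center G)).ncard := by
  rw [cent_eq_image_comap_mk, Set.ncard_image_of_injective _ (comap_injective mk_surjective)]

end CentralQuotient

theorem Nat.squarefree_mul_mul_of_prime {p q r : ℕ} (hp : p.Prime) (hq : q.Prime) (hr : r.Prime)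
    (hpq : p ≠ q) (hpr : p ≠ r) (hqr : q ≠ r) : Squarefree (p * q * r) := by
  rw [Nat.squarefree_mul_iff, Nat.squarefree_mul_iff]
  exact ⟨((Nat.coprime_primes hp hr).mpr hpr).mul_left ((Nat.coprime_primes hq hr).mpr hqr),
    ⟨(Nat.coprime_primes hp hq).mpr hpq, hp.squarefree, hq.squarefree⟩, hr.squarefree⟩

theorem primitive_centralizer_of_central_quotient_pqr
    (G : Type*) [Group G] [Finite G] (p q r : ℕ)
    (hp : p.Prime) (hq : q.Prime) (hr : r.Prime)
    (hpq : p < q) (hqr : q < r)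
    (h : Nat.card (G ⧸ Subgroup.center G) = p * q * r) :
    (Cent G).ncard = (Cent (G ⧸ Subgroup.center G)).ncard := by
  have : IsZGroup (G ⧸ center G) :=
    IsZGroup.of_squarefree <| h ▸
      Nat.squarefree_mul_mul_of_prime hp hq hr hpq.ne (hpq.trans hqr).ne hqr.ne
  exact ncard_cent_eq_ncard_cent_quotient_center
end

section
/- Let G be a finite non-abelian group of order p²q with p < q primes. Then either |Cent(G)| = q + 2, or G is isomorphic to the alternating group A₄ (in which case |Cent(G)| = 6). -/
/-!
Let `Q` be a Sylow `q`-subgroup. Sylow's theorems leave `n_q = 1` or `n_q = p²`, and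
`p² ≡ 1 (mod q)` with `p < q` forces `q = p + 1`, i.e. `(p, q) = (2, 3)`. A group of order 12
with four Sylow 3-subgroups acts faithfully on them (each is its own normalizer), with image of
index 2 in `S₄`, so it is `A₄`, whose six centralizers are counted by computation.

If `Q` is normal, let `C = C_G(Q)`, a proper subgroup as `G` is not abelian. The Sylow
`p`-subgroups have order `p²`, so they are abelian, and there are `q` of them (a normal one would
make `G = P × Q` abelian). The centralizer of `x` is `G` if `x` is central, `C` if `x ∈ C` is not
central, and otherwise a `p`-group, hence a Sylow `p`-subgroup; each Sylow `p`-subgroup occurs.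
So `Cent(G)` has `q + 2` elements.
-/

open Subgroup

lemma cent_eq_range (G : Type*) [Group G] :
    Cent G = Set.range fun x : G => centralizer {x} :=
  Set.ext fun _ => exists_congr fun _ => eq_comm

lemma map_centralizer_singleton {G H : Type*} [Group G] [Group H] (e : G ≃* H) (x : G) :
    (centralizer {x}).map e.toMonoidHom = centralizer {e x} := by
  ext y
  rw [mem_map_equiv, mem_centralizer_singleton_iff, mem_centralizer_singleton_iff,
    ← e.injective.eq_iff, map_mul, map_mul, e.apply_symm_apply]

lemma ncard_cent_congr {G H : Type*} [Group G] [Group H] (e : G ≃* H) :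
    (Cent H).ncard = (Cent G).ncard := by
  have hrange : (Set.range fun y : H => centralizer {y}) =
      (Subgroup.map e.toMonoidHom) '' Set.range fun x : G => centralizer {x} := by
    rw [← Set.range_comp, ← e.surjective.range_comp]
    exact congrArg Set.range (funext fun x => (map_centralizer_singleton e x).symm)
  rw [cent_eq_range, cent_eq_range, hrange,
    Set.ncard_image_of_injective _ (map_injective e.injective)]

lemma ncard_cent_alternatingGroup_fin_four : (Cent (alternatingGroup (Fin 4))).ncard = 6 := by
  classical
  -- `Subgroup` has no decidable equality; compare centralizers through their carriers instead
  let toFinset : Subgroup (alternatingGroup (Fin 4)) → Finset (alternatingGroup (Fin 4)) :=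
    fun H => Finset.univ.filter (· ∈ H)
  have htoFinset : Function.Injective toFinset := fun H K h => by
    ext x
    simpa [toFinset] using Finset.ext_iff.mp h x
  have hcent : toFinset '' Cent (alternatingGroup (Fin 4)) =
      ↑(Finset.univ.image fun x : alternatingGroup (Fin 4) =>
        Finset.univ.filter fun y => y * x = x * y) := by
    simp only [cent_eq_range, ← Set.range_comp, Finset.coe_image, Finset.coe_univ,
      Set.image_univ]
    congr 1
    funext x
    simp only [Function.comp, toFinset, mem_centralizer_singleton_iff]
  rw [← Set.ncard_image_of_injective _ htoFinset, hcent, Set.ncard_coe_finset]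
  decide

lemma eq_one_or_eq_four_of_dvd_sq_of_modEq_one {p q n : ℕ} (hp : p.Prime) (hq : q.Prime)
    (hpq : p < q) (hn : n ∣ p ^ 2) (hmod : n ≡ 1 [MOD q]) : n = 1 ∨ p = 2 ∧ q = 3 ∧ n = 4 := by
  obtain ⟨i, hi, rfl⟩ := (Nat.dvd_prime_pow hp).mp hn
  have hp2 := hp.two_le
  interval_cases i
  · exact Or.inl (pow_zero p)
  · rw [pow_one, Nat.ModEq, Nat.mod_eq_of_lt hpq, Nat.mod_eq_of_lt hq.one_lt] at hmod
    exact absurd hmod hp.one_lt.ne'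
  · have hdvd : q ∣ (p + 1) * (p - 1) := by
      rw [← one_pow 2, ← Nat.sq_sub_sq]
      exact (Nat.modEq_iff_dvd' (Nat.one_le_pow 2 p hp.pos)).mp hmod.symm
    have hndvd : ¬ q ∣ p - 1 := fun h => by
      have := Nat.le_of_dvd (by omega) h
      omega
    have hq' : q = p + 1 := by
      have := Nat.le_of_dvd (by omega) ((hq.dvd_mul.mp hdvd).resolve_right hndvd)
      omega
    have hp' : p = 2 := hp.eq_two_or_odd'.resolve_right fun hodd => by
      have := hq.even_iff.mp (hq' ▸ hodd.add_one)
      omega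
    subst hq' hp'
    norm_num

section
variable {G : Type*} [Group G] {p : ℕ} [hp : Fact p.Prime]

lemma le_centralizer_of_card_eq_sq {H : Subgroup G} (hH : Nat.card H = p ^ 2) :
    H ≤ centralizer H :=
  le_centralizer_iff_isMulCommutative.mpr (IsPGroup.isMulCommutative_of_card_eq_prime_sq hH)

lemma le_centralizer_of_card_eq_prime {H : Subgroup G} (hH : Nat.card H = p) :
    H ≤ centralizer H :=
  have := isCyclic_of_prime_card hH
  le_centralizer_iff_isMulCommutative.mpr inferInstance

variable [Finite G]

lemma index_eq_of_card_eq {H : Subgroup G} {a b : ℕ} (hH : Nat.card H = a)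
    (hG : Nat.card G = a * b) : H.index = b :=
  Nat.eq_of_mul_eq_mul_left (hH ▸ Nat.card_pos) (by rw [← hG, ← hH, card_mul_index])

lemma inf_eq_bot_of_card_eq_prime {H K : Subgroup G} (hH : Nat.card H = p) (hK : Nat.card K = p)
    (hHK : H ≠ K) : H ⊓ K = ⊥ := by
  have hdvd : Nat.card (H ⊓ K : Subgroup G) ∣ p := hH ▸ card_dvd_of_le inf_le_left
  rcases (Nat.dvd_prime hp.out).mp hdvd with h | h
  · exact card_eq_one.mp h
  · have hH' := eq_of_le_of_card_ge (inf_le_left : H ⊓ K ≤ H) (by rw [h, hH])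
    have hK' := eq_of_le_of_card_ge (inf_le_right : H ⊓ K ≤ K) (by rw [h, hK])
    exact absurd (hH'.symm.trans hK') hHK

lemma Sylow.le_of_dvd_card [Subsingleton (Sylow p G)] (P : Sylow p G) (hP : Nat.card P = p)
    {H : Subgroup G} (hH : p ∣ Nat.card H) : (P : Subgroup G) ≤ H := by
  obtain ⟨c, hc⟩ := exists_prime_orderOf_dvd_card' p hH
  have hcard : Nat.card (zpowers (c : G)) = p := by rw [Nat.card_zpowers, orderOf_coe, hc]
  obtain ⟨R, hR⟩ := (IsPGroup.of_card (n := 1) (by rw [hcard, pow_one])).exists_le_sylow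
  have hcP : zpowers (c : G) = P :=
    eq_of_le_of_card_ge (Subsingleton.elim R P ▸ hR) (by rw [hcard, hP])
  exact hcP ▸ zpowers_le.mpr c.2

lemma injective_toPermHom_sylow
    (hP : ∀ P : Sylow p G, Nat.card P = p) (hn : Nat.card (Sylow p G) * p = Nat.card G)
    (hn1 : 1 < Nat.card (Sylow p G)) :
    Function.Injective (MulAction.toPermHom G (Sylow p G)) := by
  have hnorm (P : Sylow p G) : normalizer (P : Set G) = P := by
    have h := card_mul_index (normalizer (P : Set G))
    rw [← P.card_eq_index_normalizer, ← hn, mul_comm, Nat.mul_left_cancel_iff (by omega)] at h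
    exact (eq_of_le_of_card_ge le_normalizer (h.trans (hP P).symm).le).symm
  have : Nontrivial (Sylow p G) := Finite.one_lt_card_iff_nontrivial.mp hn1
  obtain ⟨P₁, P₂, hne⟩ := exists_pair_ne (Sylow p G)
  rw [injective_iff_map_eq_one]
  intro g hg
  have hmem (P : Sylow p G) : g ∈ (P : Subgroup G) := by
    rw [← hnorm P]
    exact Sylow.smul_eq_iff_mem_normalizer.mp congr($hg P)
  have hbot := inf_eq_bot_of_card_eq_prime (hP P₁) (hP P₂) fun h => hne (Sylow.ext h)
  exact mem_bot.mp (hbot ▸ mem_inf.mpr ⟨hmem P₁, hmem P₂⟩)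

lemma nonempty_mulEquiv_alternatingGroup {α : Type*} [Fintype α] [DecidableEq α]
    {f : G →* Equiv.Perm α} (hf : Function.Injective f)
    (hG : 2 * Nat.card G = Nat.card (Equiv.Perm α)) : Nonempty (G ≃* alternatingGroup α) := by
  have hrange : Nat.card f.range = Nat.card G :=
    Nat.card_congr (MonoidHom.ofInjective hf).toEquiv.symm
  have hidx : f.range.index = 2 := by
    have h := card_mul_index f.range
    rw [hrange, ← hG, mul_comm 2] at h
    exact Nat.eq_of_mul_eq_mul_left Nat.card_pos h
  exact ⟨(MonoidHom.ofInjective hf).trans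
    (MulEquiv.subgroupCongr (Equiv.Perm.eq_alternatingGroup_of_index_eq_two hidx))⟩

end

section
variable {G : Type*} [Group G] [Finite G] {p q : ℕ} [hp : Fact p.Prime] [hq : Fact q.Prime]

lemma card_sylow_eq_sq (hpq : p ≠ q) (hcard : Nat.card G = p ^ 2 * q) (P : Sylow p G) :
    Nat.card P = p ^ 2 := by
  rw [P.card_eq_multiplicity, hcard,
    Nat.factorization_mul (by simp [hp.out.ne_zero]) hq.out.ne_zero]
  simp [hp.out.factorization, hq.out.factorization, hpq]

lemma card_sylow_eq_prime (hpq : p ≠ q) (hcard : Nat.card G = p ^ 2 * q) (Q : Sylow q G) :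
    Nat.card Q = q := by
  rw [Q.card_eq_multiplicity, hcard,
    Nat.factorization_mul (by simp [hp.out.ne_zero]) hq.out.ne_zero]
  simp [hp.out.factorization, hq.out.factorization, hpq.symm]

lemma sylow_ne_top (hpq : p ≠ q) (hcard : Nat.card G = p ^ 2 * q) (P : Sylow p G) :
    (P : Subgroup G) ≠ ⊤ := fun h => by
  have := card_sylow_eq_sq hpq hcard P
  rw [h, card_top, hcard, mul_eq_left₀ (by simp [hp.out.ne_zero])] at this
  exact hq.out.ne_one this

lemma sylow_le_centralizer_of_mem (hpq : p ≠ q) (hcard : Nat.card G = p ^ 2 * q) (P : Sylow p G)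
    {x : G} (hx : x ∈ P) : (P : Subgroup G) ≤ centralizer {x} :=
  (le_centralizer_of_card_eq_sq (card_sylow_eq_sq hpq hcard P)).trans
    (centralizer_le (Set.singleton_subset_iff.mpr hx))

lemma eq_top_of_sylow_le (hpq : p ≠ q) (hcard : Nat.card G = p ^ 2 * q) (P : Sylow p G)
    (Q : Sylow q G) {H : Subgroup G} (hP : (P : Subgroup G) ≤ H) (hQ : (Q : Subgroup G) ≤ H) :
    H = ⊤ := by
  refine eq_top_of_card_eq H (Nat.dvd_antisymm (card_subgroup_dvd_card H) ?_)
  rw [hcard]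
  refine (((Nat.coprime_primes hp.out hq.out).mpr hpq).pow_left 2).mul_dvd_of_dvd_of_dvd ?_ ?_
  · exact card_sylow_eq_sq hpq hcard P ▸ card_dvd_of_le hP
  · exact card_sylow_eq_prime hpq hcard Q ▸ card_dvd_of_le hQ

lemma card_eq_of_prime_dvd_card (hcard : Nat.card G = p ^ 2 * q) {H : Subgroup G}
    (hH : H ≠ ⊤) (hqH : q ∣ Nat.card H) : Nat.card H = q ∨ Nat.card H = p * q := by
  obtain ⟨d, hd⟩ := hqH
  have hd2 : d ∣ p ^ 2 := by
    rw [← mul_dvd_mul_iff_left hq.out.ne_zero, ← hd, mul_comm, ← hcard]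
    exact card_subgroup_dvd_card H
  obtain ⟨i, hi, rfl⟩ := (Nat.dvd_prime_pow hp.out).mp hd2
  interval_cases i
  · simp [hd]
  · simp [hd, mul_comm]
  · exact absurd (eq_top_of_card_eq H (by rw [hd, hcard, mul_comm])) hH

lemma not_le_centralizer_sylow (hpq : p ≠ q) (hcard : Nat.card G = p ^ 2 * q)
    (hna : ¬ ∀ a b : G, a * b = b * a) (P : Sylow p G) (Q : Sylow q G) :
    ¬ (Q : Subgroup G) ≤ centralizer P := fun hQP => by
  have hP := le_centralizer_of_card_eq_sq (card_sylow_eq_sq hpq hcard P)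
  have hQ := le_centralizer_of_card_eq_prime (card_sylow_eq_prime hpq hcard Q)
  have hPZ : (P : Subgroup G) ≤ center G :=
    centralizer_eq_top_iff_subset.mp (eq_top_of_sylow_le hpq hcard P Q hP hQP)
  have hQZ : (Q : Subgroup G) ≤ center G :=
    centralizer_eq_top_iff_subset.mp
      (eq_top_of_sylow_le hpq hcard P Q (le_centralizer_iff.mp hQP) hQ)
  have hZ := eq_top_of_sylow_le hpq hcard P Q hPZ hQZ
  exact hna fun a b => mem_center_iff.mp (hZ ▸ mem_top b) a

lemma centralizer_sylow_ne_top (hpq : p ≠ q) (hcard : Nat.card G = p ^ 2 * q)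
    (hna : ¬ ∀ a b : G, a * b = b * a) (Q : Sylow q G) : centralizer (Q : Set G) ≠ ⊤ := fun h => by
  obtain ⟨P⟩ : Nonempty (Sylow p G) := inferInstance
  exact not_le_centralizer_sylow hpq hcard hna P Q
    ((centralizer_eq_top_iff_subset.mp h).trans (center_le_centralizer _))

lemma card_sylow_eq_of_subsingleton (hpq : p ≠ q) (hcard : Nat.card G = p ^ 2 * q)
    (hna : ¬ ∀ a b : G, a * b = b * a) [Subsingleton (Sylow q G)] :
    Nat.card (Sylow p G) = q := by
  obtain ⟨P⟩ : Nonempty (Sylow p G) := inferInstance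
  obtain ⟨Q⟩ : Nonempty (Sylow q G) := inferInstance
  have hidx : (P : Subgroup G).index = q :=
    index_eq_of_card_eq (card_sylow_eq_sq hpq hcard P) hcard
  rcases (Nat.dvd_prime hq.out).mp (hidx ▸ P.card_dvd_index) with h | h
  · have : Subsingleton (Sylow p G) := (Nat.card_eq_one_iff_unique.mp h).1
    have hdis : Disjoint (P : Subgroup G) Q := disjoint_of_coprime_natCard <| by
      rw [card_sylow_eq_sq hpq hcard P, card_sylow_eq_prime hpq hcard Q]
      exact ((Nat.coprime_primes hp.out hq.out).mpr hpq).pow_left 2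
    refine absurd (fun y hy x hx => ?_) (not_le_centralizer_sylow hpq hcard hna P Q)
    exact commute_of_normal_of_disjoint _ _ (Sylow.normal_of_subsingleton P)
      (Sylow.normal_of_subsingleton Q) hdis x y hx hy
  · exact h

lemma isPGroup_centralizer_of_notMem (hpq : p ≠ q) (hcard : Nat.card G = p ^ 2 * q)
    [Subsingleton (Sylow q G)] (Q : Sylow q G) {x : G} (hx : x ∉ centralizer (Q : Set G)) :
    IsPGroup p (centralizer {x}) := by
  have hqx : ¬ q ∣ Nat.card (centralizer {x}) := fun h => hx fun u hu =>
    mem_centralizer_singleton_iff.mp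
      (Sylow.le_of_dvd_card Q (card_sylow_eq_prime hpq hcard Q) h hu)
  have hdvd : Nat.card (centralizer {x}) ∣ p ^ 2 :=
    ((hq.out.coprime_iff_not_dvd.mpr hqx).symm).dvd_of_dvd_mul_right
      (hcard ▸ card_subgroup_dvd_card _)
  obtain ⟨k, -, hk⟩ := (Nat.dvd_prime_pow hp.out).mp hdvd
  exact IsPGroup.of_card hk

lemma exists_sylow_eq_centralizer (hpq : p ≠ q) (hcard : Nat.card G = p ^ 2 * q) {x : G}
    (hx : IsPGroup p (centralizer {x})) : ∃ P : Sylow p G, centralizer {x} = P := by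
  obtain ⟨P, hP⟩ := hx.exists_le_sylow
  have hxP : x ∈ P := hP (mem_centralizer_singleton_iff.mpr rfl)
  exact ⟨P, le_antisymm hP (sylow_le_centralizer_of_mem hpq hcard P hxP)⟩

lemma centralizer_eq_of_mem_of_notMem_center (hpq : p ≠ q) (hcard : Nat.card G = p ^ 2 * q)
    (hna : ¬ ∀ a b : G, a * b = b * a) [Subsingleton (Sylow q G)] (Q : Sylow q G) {x : G}
    (hxC : x ∈ centralizer (Q : Set G)) (hxZ : x ∉ center G) :
    centralizer {x} = centralizer (Q : Set G) := by
  have hQx : (Q : Subgroup G) ≤ centralizer {x} := fun u hu =>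
    mem_centralizer_singleton_iff.mpr (hxC u hu)
  have hxtop : centralizer {x} ≠ ⊤ := fun h =>
    hxZ (centralizer_eq_top_iff_subset.mp h rfl)
  -- if `y ∉ C_G(Q)` commutes with `x`, then `x` lies in the Sylow `p`-subgroup `C_G(y)`, which is
  -- abelian and so centralizes `x`, as `Q` does: `x` would be central
  have hle : centralizer {x} ≤ centralizer (Q : Set G) := fun y hy => by
    by_contra hyC
    obtain ⟨P, hP⟩ := exists_sylow_eq_centralizer hpq hcard
      (isPGroup_centralizer_of_notMem hpq hcard Q hyC)
    have hxP : x ∈ (P : Subgroup G) := by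
      rw [← hP, mem_centralizer_singleton_iff]
      exact (mem_centralizer_singleton_iff.mp hy).symm
    exact hxtop (eq_top_of_sylow_le hpq hcard P Q (sylow_le_centralizer_of_mem hpq hcard P hxP) hQx)
  have hcardQ := card_sylow_eq_prime hpq hcard Q
  rcases card_eq_of_prime_dvd_card hcard hxtop (hcardQ ▸ card_dvd_of_le hQx) with h | h
  · have hxQ : x ∈ (Q : Subgroup G) := by
      rw [eq_of_le_of_card_ge hQx (by rw [h, hcardQ])]
      exact mem_centralizer_singleton_iff.mpr rfl
    exact le_antisymm hle fun c hc => mem_centralizer_singleton_iff.mpr (hc x hxQ).symm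
  · refine eq_of_le_of_card_ge hle ?_
    have hQC := le_centralizer_of_card_eq_prime hcardQ
    rcases card_eq_of_prime_dvd_card hcard (centralizer_sylow_ne_top hpq hcard hna Q)
      ((dvd_of_eq hcardQ.symm).trans (card_dvd_of_le hQC)) with hC | hC <;> rw [h, hC]
    exact Nat.le_mul_of_pos_left q hp.out.pos

lemma exists_centralizer_eq_sylow (hpq : p ≠ q) (hcard : Nat.card G = p ^ 2 * q)
    (hna : ¬ ∀ a b : G, a * b = b * a) [Subsingleton (Sylow q G)] (P : Sylow p G) :
    ∃ x : G, centralizer {x} = P := by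
  obtain ⟨Q⟩ : Nonempty (Sylow q G) := inferInstance
  have hPC : ¬ (P : Subgroup G) ≤ centralizer (Q : Set G) := fun h =>
    centralizer_sylow_ne_top hpq hcard hna Q <| eq_top_of_sylow_le hpq hcard P Q h
      (le_centralizer_of_card_eq_prime (card_sylow_eq_prime hpq hcard Q))
  obtain ⟨x, hxP, hxC⟩ := SetLike.not_le_iff_exists.mp hPC
  obtain ⟨P', hP'⟩ :=
    exists_sylow_eq_centralizer hpq hcard (isPGroup_centralizer_of_notMem hpq hcard Q hxC)
  have hPP' : (P : Subgroup G) ≤ P' := hP' ▸ sylow_le_centralizer_of_mem hpq hcard P hxP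
  refine ⟨x, hP'.trans (eq_of_le_of_card_ge hPP' ?_).symm⟩
  rw [card_sylow_eq_sq hpq hcard P, card_sylow_eq_sq hpq hcard P']

lemma cent_eq_of_subsingleton_sylow (hpq : p ≠ q) (hcard : Nat.card G = p ^ 2 * q)
    (hna : ¬ ∀ a b : G, a * b = b * a) [Subsingleton (Sylow q G)] (Q : Sylow q G) :
    Cent G = insert ⊤ (insert (centralizer (Q : Set G))
      (Set.range ((↑) : Sylow p G → Subgroup G))) := by
  ext H
  constructor
  · rintro ⟨x, rfl⟩
    by_cases hxC : x ∈ centralizer (Q : Set G)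
    · by_cases hxZ : x ∈ center G
      · exact Or.inl (centralizer_eq_top_iff_subset.mpr (Set.singleton_subset_iff.mpr hxZ))
      · exact Or.inr (Or.inl (centralizer_eq_of_mem_of_notMem_center hpq hcard hna Q hxC hxZ))
    · obtain ⟨P, hP⟩ := exists_sylow_eq_centralizer hpq hcard
        (isPGroup_centralizer_of_notMem hpq hcard Q hxC)
      exact Or.inr (Or.inr ⟨P, hP.symm⟩)
  · rintro (rfl | rfl | ⟨P, rfl⟩)
    · exact ⟨1, (centralizer_eq_top_iff_subset.mpr (by simp)).symm⟩
    · have hQZ : ¬ (Q : Subgroup G) ≤ center G := fun h =>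
        centralizer_sylow_ne_top hpq hcard hna Q (centralizer_eq_top_iff_subset.mpr h)
      obtain ⟨x, hxQ, hxZ⟩ := SetLike.not_le_iff_exists.mp hQZ
      have hxC := le_centralizer_of_card_eq_prime (card_sylow_eq_prime hpq hcard Q) hxQ
      exact ⟨x, (centralizer_eq_of_mem_of_notMem_center hpq hcard hna Q hxC hxZ).symm⟩
    · obtain ⟨x, hx⟩ := exists_centralizer_eq_sylow hpq hcard hna P
      exact ⟨x, hx.symm⟩

lemma ncard_cent_of_subsingleton_sylow (hpq : p ≠ q) (hcard : Nat.card G = p ^ 2 * q)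
    (hna : ¬ ∀ a b : G, a * b = b * a) [Subsingleton (Sylow q G)] :
    (Cent G).ncard = q + 2 := by
  obtain ⟨Q⟩ : Nonempty (Sylow q G) := inferInstance
  have hC := centralizer_sylow_ne_top hpq hcard hna Q
  have hCP : centralizer (Q : Set G) ∉ Set.range ((↑) : Sylow p G → Subgroup G) :=
    fun ⟨P, hP⟩ => sylow_ne_top hpq hcard P <| eq_top_of_sylow_le hpq hcard P Q le_rfl
      (hP ▸ le_centralizer_of_card_eq_prime (card_sylow_eq_prime hpq hcard Q))
  have hT : (⊤ : Subgroup G) ∉ insert (centralizer (Q : Set G))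
      (Set.range ((↑) : Sylow p G → Subgroup G)) := by
    rintro (h | ⟨P, hP⟩)
    · exact hC h.symm
    · exact sylow_ne_top hpq hcard P hP
  rw [cent_eq_of_subsingleton_sylow hpq hcard hna Q, Set.ncard_insert_of_notMem hT,
    Set.ncard_insert_of_notMem hCP, Set.ncard_range_of_injective fun _ _ => Sylow.ext,
    card_sylow_eq_of_subsingleton hpq hcard hna]

end

lemma nonempty_mulEquiv_alternatingGroup_fin_four {G : Type*} [Group G] [Finite G]
    (hcard : Nat.card G = 2 ^ 2 * 3)
    (hn : Nat.card (Sylow 3 G) = 4) : Nonempty (G ≃* alternatingGroup (Fin 4)) := by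
  have hinj := injective_toPermHom_sylow
    (fun P => card_sylow_eq_prime (p := 2) (by norm_num) hcard P) (by rw [hn, hcard]; rfl)
    (by rw [hn]; norm_num)
  let e : Sylow 3 G ≃ Fin 4 := Finite.equivFinOfCardEq hn
  exact nonempty_mulEquiv_alternatingGroup (f := e.permCongrHom.toMonoidHom.comp _)
    (e.permCongrHom.injective.comp hinj) (by rw [hcard, Nat.card_perm, Nat.card_fin]; rfl)

theorem card_cent_of_order_p_sq_q
    (G : Type*) [Group G] [Finite G] (p q : ℕ)
    (hp : p.Prime) (hq : q.Prime) (hpq : p < q)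
    (hcard : Nat.card G = p ^ 2 * q)
    (hna : ¬ ∀ a b : G, a * b = b * a) :
    (Cent G).ncard = q + 2 ∨
      (Nonempty (G ≃* alternatingGroup (Fin 4)) ∧ (Cent G).ncard = 6) := by
  have := Fact.mk hp
  have := Fact.mk hq
  obtain ⟨Q⟩ : Nonempty (Sylow q G) := inferInstance
  have hdvd : Nat.card (Sylow q G) ∣ p ^ 2 :=
    index_eq_of_card_eq (card_sylow_eq_prime hpq.ne hcard Q) (by rw [hcard, mul_comm]) ▸
      Q.card_dvd_index
  rcases eq_one_or_eq_four_of_dvd_sq_of_modEq_one hp hq hpq hdvd (card_sylow_modEq_one q G) with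
    h | ⟨rfl, rfl, h⟩
  · have : Subsingleton (Sylow q G) := (Nat.card_eq_one_iff_unique.mp h).1
    exact Or.inl (ncard_cent_of_subsingleton_sylow hpq.ne hcard hna)
  · obtain ⟨e⟩ := nonempty_mulEquiv_alternatingGroup_fin_four hcard h
    exact Or.inr ⟨⟨e⟩, (ncard_cent_congr e).symm.trans ncard_cent_alternatingGroup_fin_four⟩
end

section
/- Let G be a finite non-abelian group of order pq² with p < q primes. Then |Cent(G)| = q + 2 or q² + 2. -/
/-!
The Sylow `q`-subgroup `Q` is normal of index `p` (as `p < q`), abelian, and not central because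
`G` is not abelian. Hence `C(y) = Q` for `y ∈ Q \ Z(G)`, so `Z(G) ≤ Q`; for `x ∉ Q` one gets
`C(x) ∩ Q = Z(G)` and `C(x) Q = G`, i.e. `|C(x)| = p |Z(G)|`, and since `p ∤ |Z(G)|` this forces
`C(x) = Z(G) P` for a Sylow `p`-subgroup `P ≤ C(x)`. As `P ↦ Z(G) P` is injective, the
centralizers are `G`, `Q` and one for each Sylow `p`-subgroup: there are `n_p + 2` of them.
Finally `n_p ∣ q²`, and `n_p ≠ 1` since a normal `P` would centralize `Q`.
-/

open Subgroup

namespace Subgroup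

variable {G : Type*} [Group G]

theorem eq_or_eq_top_of_index_prime_of_le {H K : Subgroup G} (hH : H.index.Prime)
    (hHK : H ≤ K) : K = H ∨ K = ⊤ := by
  rcases hH.eq_one_or_self_of_dvd _ (index_dvd_of_le hHK) with hK | hK
  · exact Or.inr (index_eq_one.mp hK)
  · have hrel : H.relIndex K = 1 := by
      have := relIndex_mul_index hHK
      rwa [hK, Nat.mul_eq_right hH.ne_zero] at this
    exact Or.inl (le_antisymm (relIndex_eq_one.mp hrel) hHK)

theorem isMulCommutative_of_le_center_of_index_prime {H : Subgroup G} (hH : H.index.Prime)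
    (hHZ : H ≤ center G) : IsMulCommutative G := by
  rcases eq_or_eq_top_of_index_prime_of_le hH hHZ with hZ | hZ
  · have : Fact (center G).index.Prime := ⟨hZ ▸ hH⟩
    have : IsCyclic (G ⧸ center G) := isCyclic_of_prime_card (p := (center G).index) rfl
    exact isMulCommutative_of_isCyclic_quotient_center_self G
  · exact ⟨⟨fun a b => mem_center_iff.mp (hZ ▸ mem_top b) a⟩⟩

theorem card_mul_relIndex {H K : Subgroup G} (h : H ≤ K) :
    Nat.card H * H.relIndex K = Nat.card K := by
  simpa only [relIndex_bot_left] using relIndex_mul_relIndex ⊥ H K bot_le h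

end Subgroup

theorem Sylow.center_sup_injective {G : Type*} [Group G] (p : ℕ) :
    Function.Injective fun P : Sylow p G => center G ⊔ (P : Subgroup G) := by
  intro P₁ P₂ (h : center G ⊔ (P₁ : Subgroup G) = center G ⊔ P₂)
  -- a Sylow subgroup contains every `p`-subgroup normalizing it
  have hle : ∀ P : Sylow p G, center G ⊔ (P : Subgroup G) ≤ normalizer (P : Set G) :=
    fun P => sup_le (center_le_normalizer _) le_normalizer
  have h21 : (P₂ : Subgroup G) ≤ P₁ := by
    rw [← inf_eq_left, ← P₂.isPGroup'.inf_normalizer_sylow P₁, inf_eq_left]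
    exact le_sup_right.trans (h.symm.le.trans (hle P₁))
  exact Sylow.ext (P₂.is_maximal' P₁.isPGroup' h21)

theorem Sylow.normal_of_index_prime_lt {G : Type*} [Group G] [Finite G] {p q : ℕ}
    [hq : Fact q.Prime] (hp : p.Prime) (hpq : p < q) (Q : Sylow q G)
    (hQ : (Q : Subgroup G).index = p) : (Q : Subgroup G).Normal := by
  rcases hp.eq_one_or_self_of_dvd _ (hQ ▸ Q.card_dvd_index) with h | h
  · have : Subsingleton (Sylow q G) := (Nat.card_eq_one_iff_unique.mp h).1
    exact Q.normal_of_subsingleton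
  · have hmod := card_sylow_modEq_one q G
    rw [h, Nat.ModEq, Nat.mod_eq_of_lt hpq, Nat.mod_eq_of_lt hq.out.one_lt] at hmod
    exact absurd hmod hp.ne_one

section PrimeIndexAbelianSubgroup

variable {G : Type*} [Group G] {Q : Subgroup G}

theorem Subgroup.centralizer_eq_of_mem_of_notMem_center [IsMulCommutative Q]
    (hQ : Q.index.Prime) {y : G} (hyQ : y ∈ Q) (hyZ : y ∉ center G) : centralizer {y} = Q := by
  have hQy : Q ≤ centralizer {y} :=
    (le_centralizer Q).trans (centralizer_le (Set.singleton_subset_iff.mpr hyQ))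
  refine (eq_or_eq_top_of_index_prime_of_le hQ hQy).resolve_right fun h => hyZ ?_
  exact centralizer_eq_top_iff_subset.mp h rfl

theorem Subgroup.center_le_of_not_le_center [IsMulCommutative Q] (hQ : Q.index.Prime)
    (hQZ : ¬ Q ≤ center G) : center G ≤ Q := by
  obtain ⟨y, hyQ, hyZ⟩ := SetLike.not_le_iff_exists.mp hQZ
  exact centralizer_eq_of_mem_of_notMem_center hQ hyQ hyZ ▸ center_le_centralizer {y}

theorem Subgroup.centralizer_inf_eq_center_of_notMem [IsMulCommutative Q] (hQ : Q.index.Prime)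
    (hQZ : ¬ Q ≤ center G) {x : G} (hx : x ∉ Q) : centralizer {x} ⊓ Q = center G := by
  refine le_antisymm (fun y ⟨hyx, hyQ⟩ => ?_)
    (le_inf (center_le_centralizer _) (center_le_of_not_le_center hQ hQZ))
  by_contra hyZ
  rw [← centralizer_eq_of_mem_of_notMem_center hQ hyQ hyZ, mem_centralizer_singleton_iff] at hx
  exact hx (mem_centralizer_singleton_iff.mp hyx).symm

theorem Subgroup.card_centralizer_of_notMem [Q.Normal] [IsMulCommutative Q] (hQ : Q.index.Prime)
    (hQZ : ¬ Q ≤ center G) {x : G} (hx : x ∉ Q) :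
    Nat.card (centralizer {x}) = Nat.card (center G) * Q.index := by
  have hsup : centralizer {x} ⊔ Q = ⊤ :=
    (eq_or_eq_top_of_index_prime_of_le hQ le_sup_right).resolve_left fun h =>
      hx (h ▸ mem_sup_left (mem_centralizer_singleton_iff.mpr rfl))
  calc Nat.card (centralizer {x})
      = Nat.card ↥(centralizer {x} ⊓ Q) * (centralizer {x} ⊓ Q).relIndex (centralizer {x}) :=
        (card_mul_relIndex inf_le_left).symm
    _ = Nat.card (center G) * Q.index := by
        rw [inf_relIndex_left, ← relIndex_sup_right, hsup, relIndex_top_right,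
          centralizer_inf_eq_center_of_notMem hQ hQZ hx]

variable [Finite G] {p : ℕ} [hp : Fact p.Prime]

theorem Subgroup.factorization_card_eq_one_of_index_eq (hQ : Q.index = p)
    (hQp : ¬ p ∣ Nat.card Q) : (Nat.card G).factorization p = 1 := by
  rw [← Q.card_mul_index, hQ, Nat.factorization_mul Nat.card_pos.ne' hp.out.ne_zero,
    Finsupp.add_apply, Nat.factorization_eq_zero_of_not_dvd hQp, hp.out.factorization_self]

theorem Sylow.card_eq_of_index_eq (P : Sylow p G) (hQ : Q.index = p) (hQp : ¬ p ∣ Nat.card Q) :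
    Nat.card P = p := by
  rw [P.card_eq_multiplicity, Subgroup.factorization_card_eq_one_of_index_eq hQ hQp, pow_one]

theorem Sylow.disjoint_of_index_eq (P : Sylow p G) (hQ : Q.index = p) (hQp : ¬ p ∣ Nat.card Q) :
    Disjoint (P : Subgroup G) Q := disjoint_of_coprime_natCard <| by
  rw [P.card_eq_of_index_eq hQ hQp]
  exact hp.out.coprime_iff_not_dvd.mpr hQp

theorem Sylow.exists_mem_notMem_of_index_eq (P : Sylow p G) (hQ : Q.index = p)
    (hQp : ¬ p ∣ Nat.card Q) : ∃ g ∈ (P : Subgroup G), g ∉ Q := by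
  obtain hP | ⟨g, hgP, hg1⟩ := (P : Subgroup G).bot_or_exists_ne_one
  · have := P.card_eq_of_index_eq hQ hQp
    rw [hP, card_bot] at this
    exact absurd this.symm hp.out.ne_one
  · exact ⟨g, hgP, fun hgQ => hg1 (disjoint_def.mp (P.disjoint_of_index_eq hQ hQp) hgP hgQ)⟩

theorem card_sylow_dvd_card_of_index_eq (hQ : Q.index = p) (hQp : ¬ p ∣ Nat.card Q) :
    Nat.card (Sylow p G) ∣ Nat.card Q := by
  obtain ⟨P⟩ : Nonempty (Sylow p G) := inferInstance
  have hPindex : (P : Subgroup G).index = Nat.card Q := by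
    have h := (P : Subgroup G).card_mul_index
    rw [P.card_eq_of_index_eq hQ hQp, ← Q.card_mul_index, hQ] at h
    exact Nat.eq_of_mul_eq_mul_left hp.out.pos (h.trans (mul_comm _ _))
  exact hPindex ▸ P.card_dvd_index

variable [Q.Normal] [IsMulCommutative Q]

theorem Subgroup.centralizer_eq_center_sup_of_sylow_le (hQ : Q.index = p)
    (hQp : ¬ p ∣ Nat.card Q) (hQZ : ¬ Q ≤ center G) {x : G} (hx : x ∉ Q) (P : Sylow p G)
    (hPx : (P : Subgroup G) ≤ centralizer {x}) : centralizer {x} = center G ⊔ P := by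
  have hle : center G ⊔ P ≤ centralizer {x} := sup_le (center_le_centralizer _) hPx
  refine (eq_of_le_of_card_ge hle ?_).symm
  have hZp : (Nat.card (center G)).Coprime p := (hp.out.coprime_iff_not_dvd.mpr fun h =>
    hQp (h.trans (card_dvd_of_le (center_le_of_not_le_center (hQ ▸ hp.out) hQZ)))).symm
  rw [card_centralizer_of_notMem (hQ ▸ hp.out) hQZ hx, hQ]
  refine Nat.le_of_dvd Nat.card_pos (hZp.mul_dvd_of_dvd_of_dvd (card_dvd_of_le le_sup_left) ?_)
  have hPdvd := card_dvd_of_le (le_sup_right : (P : Subgroup G) ≤ center G ⊔ P)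
  rwa [P.card_eq_of_index_eq hQ hQp] at hPdvd

theorem Subgroup.exists_sylow_le_centralizer (hQ : Q.index = p) (hQp : ¬ p ∣ Nat.card Q)
    (hQZ : ¬ Q ≤ center G) {x : G} (hx : x ∉ Q) :
    ∃ P : Sylow p G, (P : Subgroup G) ≤ centralizer {x} := by
  have hpC : p ∣ Nat.card (centralizer {x}) := by
    rw [card_centralizer_of_notMem (hQ ▸ hp.out) hQZ hx, hQ]
    exact dvd_mul_left p _
  obtain ⟨g, hg⟩ := exists_prime_orderOf_dvd_card' p hpC
  refine ⟨Sylow.ofCard (zpowers (g : G)) ?_, zpowers_le.mpr g.2⟩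
  rw [Nat.card_zpowers, orderOf_coe, hg, Subgroup.factorization_card_eq_one_of_index_eq hQ hQp,
    pow_one]

theorem Sylow.exists_centralizer_eq_center_sup (hQ : Q.index = p) (hQp : ¬ p ∣ Nat.card Q)
    (hQZ : ¬ Q ≤ center G) (P : Sylow p G) : ∃ g ∉ Q, centralizer {g} = center G ⊔ P := by
  obtain ⟨g, hgP, hgQ⟩ := P.exists_mem_notMem_of_index_eq hQ hQp
  have : IsCyclic P := isCyclic_of_prime_card (P.card_eq_of_index_eq hQ hQp)
  refine ⟨g, hgQ, centralizer_eq_center_sup_of_sylow_le hQ hQp hQZ hgQ P ?_⟩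
  exact (le_centralizer (P : Subgroup G)).trans (centralizer_le (Set.singleton_subset_iff.mpr hgP))

theorem cent_eq_insert_top_insert_range (hQ : Q.index = p) (hQp : ¬ p ∣ Nat.card Q)
    (hQZ : ¬ Q ≤ center G) :
    Cent G =
      insert ⊤ (insert Q (Set.range fun P : Sylow p G => center G ⊔ (P : Subgroup G))) := by
  ext H
  simp only [Cent, Set.mem_ofPred_eq, Set.mem_insert_iff, Set.mem_range]
  constructor
  · rintro ⟨x, rfl⟩
    by_cases hxZ : x ∈ center G
    · exact Or.inl (centralizer_eq_top_iff_subset.mpr (Set.singleton_subset_iff.mpr hxZ))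
    by_cases hxQ : x ∈ Q
    · exact Or.inr (Or.inl (centralizer_eq_of_mem_of_notMem_center (hQ ▸ hp.out) hxQ hxZ))
    obtain ⟨P, hP⟩ := exists_sylow_le_centralizer hQ hQp hQZ hxQ
    exact Or.inr (Or.inr ⟨P, (centralizer_eq_center_sup_of_sylow_le hQ hQp hQZ hxQ P hP).symm⟩)
  · rintro (rfl | rfl | ⟨P, rfl⟩)
    · refine ⟨1, (centralizer_eq_top_iff_subset.mpr ?_).symm⟩
      exact Set.singleton_subset_iff.mpr (one_mem _)
    · obtain ⟨y, hyQ, hyZ⟩ := SetLike.not_le_iff_exists.mp hQZ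
      exact ⟨y, (centralizer_eq_of_mem_of_notMem_center (hQ ▸ hp.out) hyQ hyZ).symm⟩
    · obtain ⟨g, -, hg⟩ := P.exists_centralizer_eq_center_sup hQ hQp hQZ
      exact ⟨g, hg.symm⟩

theorem ncard_cent_eq_card_sylow_add_two (hQ : Q.index = p) (hQp : ¬ p ∣ Nat.card Q)
    (hQZ : ¬ Q ≤ center G) : (Cent G).ncard = Nat.card (Sylow p G) + 2 := by
  have hQtop : Q ≠ ⊤ := fun h => hp.out.ne_one (hQ ▸ index_eq_one.mpr h)
  have hrange (P : Sylow p G) : center G ⊔ (P : Subgroup G) ≠ ⊤ ∧ center G ⊔ P ≠ Q := by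
    obtain ⟨g, hgQ, hg⟩ := P.exists_centralizer_eq_center_sup hQ hQp hQZ
    rw [← hg]
    refine ⟨fun htop => hgQ ?_,
      fun hQeq => hgQ (hQeq ▸ mem_centralizer_singleton_iff.mpr rfl)⟩
    exact center_le_of_not_le_center (hQ ▸ hp.out) hQZ
      (centralizer_eq_top_iff_subset.mp htop rfl)
  rw [cent_eq_insert_top_insert_range hQ hQp hQZ, Set.ncard_insert_of_notMem,
    Set.ncard_insert_of_notMem, Set.ncard_range_of_injective (Sylow.center_sup_injective p)]
  · rintro ⟨P, hP⟩
    exact (hrange P).2 hP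
  · rintro (h | ⟨P, hP⟩)
    · exact hQtop h.symm
    · exact (hrange P).1 hP

theorem card_sylow_ne_one_of_index_eq (hQ : Q.index = p) (hQp : ¬ p ∣ Nat.card Q)
    (hQZ : ¬ Q ≤ center G) : Nat.card (Sylow p G) ≠ 1 := by
  intro h
  have : Subsingleton (Sylow p G) := (Nat.card_eq_one_iff_unique.mp h).1
  obtain ⟨P⟩ : Nonempty (Sylow p G) := inferInstance
  obtain ⟨g, hgP, hgQ⟩ := P.exists_mem_notMem_of_index_eq hQ hQp
  have hQg : Q ≤ centralizer {g} := fun y hy =>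
    mem_centralizer_singleton_iff.mpr (commute_of_normal_of_disjoint _ _ P.normal_of_subsingleton
      ‹_› (P.disjoint_of_index_eq hQ hQp) g y hgP hy).symm
  have hQZ' := centralizer_inf_eq_center_of_notMem (hQ ▸ hp.out) hQZ hgQ
  exact hQZ (inf_eq_right.mpr hQg ▸ hQZ'.le)

end PrimeIndexAbelianSubgroup

theorem card_cent_of_order_p_q_sq
    (G : Type*) [Group G] [Finite G] (p q : ℕ)
    (hp : p.Prime) (hq : q.Prime) (hpq : p < q)
    (hcard : Nat.card G = p * q ^ 2)
    (hna : ¬ ∀ a b : G, a * b = b * a) :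
    (Cent G).ncard = q + 2 ∨ (Cent G).ncard = q ^ 2 + 2 := by
  have : Fact p.Prime := ⟨hp⟩
  have : Fact q.Prime := ⟨hq⟩
  obtain ⟨Q⟩ : Nonempty (Sylow q G) := inferInstance
  have hQcard : Nat.card Q = q ^ 2 := by
    rw [Q.card_eq_multiplicity, hcard,
      Nat.factorization_mul hp.ne_zero (pow_ne_zero 2 hq.ne_zero), Finsupp.add_apply,
      hp.factorization, Finsupp.single_eq_of_ne hpq.ne', hq.factorization_pow,
      Finsupp.single_eq_same, zero_add]
  have hQindex : (Q : Subgroup G).index = p := by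
    apply Nat.eq_of_mul_eq_mul_left (pow_pos hq.pos 2)
    rw [← hQcard, card_mul_index, hcard, hQcard, mul_comm]
  have : (Q : Subgroup G).Normal := Q.normal_of_index_prime_lt hp hpq hQindex
  have : IsMulCommutative Q := IsPGroup.isMulCommutative_of_card_eq_prime_sq hQcard
  have hQp : ¬ p ∣ Nat.card Q := hQcard ▸ fun h =>
    hpq.ne ((Nat.prime_dvd_prime_iff_eq hp hq).mp (hp.dvd_of_dvd_pow h))
  have hQZ : ¬ (Q : Subgroup G) ≤ center G := fun h =>
    hna (isMulCommutative_of_le_center_of_index_prime (hQindex ▸ hp) h).is_comm.comm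
  rw [ncard_cent_eq_card_sylow_add_two hQindex hQp hQZ]
  obtain ⟨i, hi, hnp⟩ :=
    (Nat.dvd_prime_pow hq).mp (hQcard ▸ card_sylow_dvd_card_of_index_eq hQindex hQp)
  interval_cases i
  · exact absurd hnp (card_sylow_ne_one_of_index_eq hQindex hQp hQZ)
  · exact Or.inl (by rw [hnp, pow_one])
  · exact Or.inr (by rw [hnp])
end

section
/- Let G be a finite non-abelian group of order pq² with p < q primes and trivial center. Then for every Sylow subgroup S of G and every nonidentity x ∈ S, the centralizer C_G(x) equals S; consequently |Cent(G)| = q² + 2. -/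
/-!
The Sylow `q`-subgroup `Q` has index `p < q`, so it is unique, hence normal, and abelian of order
`q²`. For `1 ≠ x ∈ Q` the centralizer contains `Q`, is proper because the center is trivial, and `Q`
has prime index, so `C(x) = Q`. For `1 ≠ x` in a Sylow `p`-subgroup `P`, a nontrivial `y ∈ Q ∩ C(x)`
would give `x ∈ C(y) = Q`; so `C(x) ∩ Q = 1`, and `C(x)` embeds into `G/Q` of order `p`, giving
`C(x) = P`. Likewise `N(P) ∩ Q` centralizes `P` (commutators land in `P ∩ Q = 1`), so `N(P) = P` and
there are `q²` Sylow `p`-subgroups. Every `x ∉ Q` has `x ^ p ∈ Q`, and `x ^ p ≠ 1` would force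
`x ∈ C(x ^ p) = Q`; so `x` lies in a Sylow `p`-subgroup. The centralizers are therefore `G`, `Q`
and the `q²` Sylow `p`-subgroups.
-/

open Subgroup

namespace Subgroup

variable {G : Type*} [Group G]

theorem le_centralizer_singleton_of_mem {H : Subgroup G} [IsMulCommutative H] {x : G}
    (hx : x ∈ H) : H ≤ centralizer {x} :=
  H.le_centralizer.trans (centralizer_le (Set.singleton_subset_iff.mpr hx))

theorem centralizer_singleton_ne_top (hz : center G = ⊥) {x : G} (hx : x ≠ 1) :
    centralizer {x} ≠ ⊤ := by
  rw [Ne, centralizer_eq_top_iff_subset, Set.singleton_subset_iff, hz]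
  exact hx

theorem eq_of_le_of_index_prime {H K : Subgroup G} (hHK : H ≤ K) (hH : H.index.Prime)
    (hK : K ≠ ⊤) : H = K := by
  have hKH : K.index = H.index :=
    (hH.eq_one_or_self_of_dvd _ (index_dvd_of_le hHK)).resolve_left (mt index_eq_one.mp hK)
  have hrel : H.relIndex K = 1 := by
    have := relIndex_mul_index hHK
    rw [hKH] at this
    exact (Nat.mul_eq_right hH.ne_zero).mp this
  exact le_antisymm hHK (relIndex_eq_one.mp hrel)

theorem eq_of_le_of_inf_eq_bot [Finite G] {H K N : Subgroup G} [N.Normal] (hHK : H ≤ K)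
    (hNK : N ⊓ K = ⊥) (hH : N.index ≤ Nat.card H) : H = K := by
  have hK : Nat.card K ∣ N.index := by
    rw [← relIndex_bot_left K, ← hNK, inf_relIndex_right]
    exact N.relIndex_dvd_index_of_normal K
  exact eq_of_le_of_card_ge hHK
    ((Nat.le_of_dvd (Nat.pos_of_ne_zero index_ne_zero_of_finite) hK).trans hH)

theorem commute_of_mem_normalizer {H N : Subgroup G} [hN : N.Normal] (hHN : H ⊓ N = ⊥)
    {x y : G} (hx : x ∈ H) (hy : y ∈ N) (hyH : y ∈ normalizer (H : Set G)) : Commute x y := by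
  suffices x * y * x⁻¹ * y⁻¹ = 1 by
    rwa [mul_inv_eq_one, mul_inv_eq_iff_eq_mul] at this
  rw [← mem_bot, ← hHN, mem_inf]
  constructor
  · have : y * x⁻¹ * y⁻¹ ∈ H := (mem_normalizer_iff.mp hyH _).mp (inv_mem hx)
    simpa only [mul_assoc] using mul_mem hx this
  · exact mul_mem (hN.conj_mem y hy x) (inv_mem hy)

end Subgroup

namespace Sylow

variable {G : Type*} [Group G] {ℓ : ℕ} [hℓ : Fact ℓ.Prime]

theorem exists_mem_of_pow_eq_one {x : G} (hx : x ^ ℓ = 1) : ∃ S : Sylow ℓ G, x ∈ S := by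
  by_cases hx1 : x = 1
  · exact ⟨default, hx1 ▸ one_mem _⟩
  · have : IsPGroup ℓ (zpowers x) :=
      IsPGroup.of_card (n := 1) (by rw [Nat.card_zpowers, orderOf_eq_prime hx hx1, pow_one])
    obtain ⟨S, hS⟩ := this.exists_le_sylow
    exact ⟨S, hS (mem_zpowers x)⟩

variable [Finite G]

theorem card_eq_of_card_eq_pow_mul (S : Sylow ℓ G) {n m : ℕ} (hG : Nat.card G = ℓ ^ n * m)
    (hm : ¬ ℓ ∣ m) : Nat.card S = ℓ ^ n := by
  have hm0 : m ≠ 0 := by rintro rfl; exact hm (dvd_zero ℓ)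
  rw [S.card_eq_multiplicity, hG, Nat.factorization_mul (pow_ne_zero n hℓ.out.ne_zero) hm0]
  simp [hℓ.out.factorization_self, Nat.factorization_eq_zero_of_not_dvd hm]

theorem index_eq_of_card_eq_pow_mul (S : Sylow ℓ G) {n m : ℕ} (hG : Nat.card G = ℓ ^ n * m)
    (hm : ¬ ℓ ∣ m) : (S : Subgroup G).index = m := by
  have := (S : Subgroup G).card_mul_index
  rw [S.card_eq_of_card_eq_pow_mul hG hm, hG] at this
  exact Nat.eq_of_mul_eq_mul_left (pow_pos hℓ.out.pos n) this

theorem subsingleton_of_index_lt (S : Sylow ℓ G) (h : (S : Subgroup G).index < ℓ) :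
    Subsingleton (Sylow ℓ G) := by
  have hle : Nat.card (Sylow ℓ G) < ℓ :=
    (Nat.le_of_dvd (Nat.pos_of_ne_zero index_ne_zero_of_finite) S.card_dvd_index).trans_lt h
  have hmod : Nat.card (Sylow ℓ G) % ℓ = 1 % ℓ := card_sylow_modEq_one ℓ G
  rw [Nat.mod_eq_of_lt hle, Nat.mod_eq_of_lt hℓ.out.one_lt] at hmod
  exact (Nat.card_eq_one_iff_unique.mp hmod).1

end Sylow

namespace OrderPrimeMulPrimeSq

variable {G : Type*} [Group G] [Finite G] {p q : ℕ} [hp : Fact p.Prime] [hq : Fact q.Prime]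

theorem sylow_q_card (hpq : p ≠ q) (hcard : Nat.card G = p * q ^ 2) (Q : Sylow q G) :
    Nat.card Q = q ^ 2 :=
  Q.card_eq_of_card_eq_pow_mul (hcard.trans (mul_comm _ _))
    fun h ↦ hpq ((Nat.prime_dvd_prime_iff_eq hq.out hp.out).mp h).symm

theorem sylow_q_index (hpq : p ≠ q) (hcard : Nat.card G = p * q ^ 2) (Q : Sylow q G) :
    (Q : Subgroup G).index = p :=
  Q.index_eq_of_card_eq_pow_mul (hcard.trans (mul_comm _ _))
    fun h ↦ hpq ((Nat.prime_dvd_prime_iff_eq hq.out hp.out).mp h).symm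

theorem sylow_p_card (hpq : p ≠ q) (hcard : Nat.card G = p * q ^ 2) (P : Sylow p G) :
    Nat.card P = p := by
  have hdvd : ¬ p ∣ q ^ 2 := fun h ↦ hpq <|
    (Nat.prime_dvd_prime_iff_eq hp.out hq.out).mp (hp.out.dvd_of_dvd_pow h)
  exact (P.card_eq_of_card_eq_pow_mul (n := 1) (by rw [pow_one, hcard]) hdvd).trans (pow_one p)

theorem sylow_p_index (hpq : p ≠ q) (hcard : Nat.card G = p * q ^ 2) (P : Sylow p G) :
    (P : Subgroup G).index = q ^ 2 := by
  have := (P : Subgroup G).card_mul_index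
  rw [sylow_p_card hpq hcard P, hcard] at this
  exact Nat.eq_of_mul_eq_mul_left hp.out.pos this

theorem sylow_q_normal (hpq : p < q) (hcard : Nat.card G = p * q ^ 2) (Q : Sylow q G) :
    (Q : Subgroup G).Normal :=
  have := Q.subsingleton_of_index_lt (sylow_q_index hpq.ne hcard Q ▸ hpq)
  Q.normal_of_subsingleton

theorem centralizer_eq_sylow_q (hpq : p ≠ q) (hcard : Nat.card G = p * q ^ 2)
    (hz : center G = ⊥) (Q : Sylow q G) {x : G} (hx : x ∈ Q) (hx1 : x ≠ 1) :
    centralizer {x} = Q := by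
  have := IsPGroup.isMulCommutative_of_card_eq_prime_sq (sylow_q_card hpq hcard Q)
  refine (eq_of_le_of_index_prime (le_centralizer_singleton_of_mem hx) ?_
    (centralizer_singleton_ne_top hz hx1)).symm
  rw [sylow_q_index hpq hcard Q]
  exact hp.out

theorem sylow_q_inf_centralizer_eq_bot (hpq : p ≠ q) (hcard : Nat.card G = p * q ^ 2)
    (hz : center G = ⊥) (Q : Sylow q G) (P : Sylow p G) {x : G} (hx : x ∈ P) (hx1 : x ≠ 1) :
    (Q : Subgroup G) ⊓ centralizer {x} = ⊥ := by
  refine eq_bot_iff.mpr fun y ⟨hyQ, hyx⟩ ↦ mem_bot.mpr (by_contra fun hy1 ↦ hx1 ?_)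
  have hxQ : x ∈ (Q : Subgroup G) := by
    rw [← centralizer_eq_sylow_q hpq hcard hz Q hyQ hy1, mem_centralizer_singleton_iff]
    exact (mem_centralizer_singleton_iff.mp hyx).symm
  exact (IsPGroup.disjoint_of_ne p q hpq _ _ P.isPGroup' Q.isPGroup').le_bot ⟨hx, hxQ⟩

theorem centralizer_eq_sylow_p (hpq : p < q) (hcard : Nat.card G = p * q ^ 2)
    (hz : center G = ⊥) (P : Sylow p G) {x : G} (hx : x ∈ P) (hx1 : x ≠ 1) :
    centralizer {x} = P := by
  obtain ⟨Q⟩ : Nonempty (Sylow q G) := inferInstance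
  have := sylow_q_normal hpq hcard Q
  have := (isCyclic_of_prime_card (sylow_p_card hpq.ne hcard P)).isMulCommutative
  refine (eq_of_le_of_inf_eq_bot (le_centralizer_singleton_of_mem hx)
    (sylow_q_inf_centralizer_eq_bot hpq.ne hcard hz Q P hx hx1) ?_).symm
  rw [sylow_q_index hpq.ne hcard Q, sylow_p_card hpq.ne hcard P]

theorem normalizer_sylow_p (hpq : p < q) (hcard : Nat.card G = p * q ^ 2)
    (hz : center G = ⊥) (P : Sylow p G) : normalizer (P : Set G) = P := by
  obtain ⟨Q⟩ : Nonempty (Sylow q G) := inferInstance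
  have := sylow_q_normal hpq hcard Q
  obtain ⟨x, hx, hx1⟩ := ((P : Subgroup G).bot_or_exists_ne_one).resolve_left
    (P.ne_bot_of_dvd_card (hcard ▸ dvd_mul_right p _))
  have hPQ : (P : Subgroup G) ⊓ Q = ⊥ :=
    (IsPGroup.disjoint_of_ne p q hpq.ne _ _ P.isPGroup' Q.isPGroup').eq_bot
  have hQN : (Q : Subgroup G) ⊓ normalizer (P : Set G) ≤ (Q : Subgroup G) ⊓ centralizer {x} :=
    fun y ⟨hyQ, hyN⟩ ↦ ⟨hyQ, mem_centralizer_singleton_iff.mpr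
      (commute_of_mem_normalizer hPQ hx hyQ hyN).symm.eq⟩
  rw [sylow_q_inf_centralizer_eq_bot hpq.ne hcard hz Q P hx hx1, le_bot_iff] at hQN
  refine (eq_of_le_of_inf_eq_bot le_normalizer hQN ?_).symm
  rw [sylow_q_index hpq.ne hcard Q, sylow_p_card hpq.ne hcard P]

theorem card_sylow_p (hpq : p < q) (hcard : Nat.card G = p * q ^ 2)
    (hz : center G = ⊥) : Nat.card (Sylow p G) = q ^ 2 := by
  obtain ⟨P⟩ : Nonempty (Sylow p G) := inferInstance
  rw [P.card_eq_index_normalizer, normalizer_sylow_p hpq hcard hz P,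
    sylow_p_index hpq.ne hcard P]

theorem centralizer_eq_sylow (hpq : p < q) (hcard : Nat.card G = p * q ^ 2)
    (hz : center G = ⊥) {ℓ : ℕ} [hℓ : Fact ℓ.Prime] (S : Sylow ℓ G) {x : G} (hx : x ∈ S)
    (hx1 : x ≠ 1) : centralizer {x} = S := by
  obtain rfl | hℓq := eq_or_ne ℓ q
  · exact centralizer_eq_sylow_q hpq.ne hcard hz S hx hx1
  obtain rfl | hℓp := eq_or_ne ℓ p
  · exact centralizer_eq_sylow_p hpq hcard hz S hx hx1
  have hℓG : ¬ ℓ ∣ p * q ^ 2 := by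
    rw [hℓ.out.dvd_mul, (Nat.prime_dvd_prime_iff_eq hℓ.out hp.out)]
    exact fun h ↦ h.elim hℓp fun h ↦
      hℓq ((Nat.prime_dvd_prime_iff_eq hℓ.out hq.out).mp (hℓ.out.dvd_of_dvd_pow h))
  have hS : Nat.card S = 1 :=
    S.card_eq_of_card_eq_pow_mul (n := 0) (by rw [pow_zero, one_mul, hcard]) hℓG
  exact absurd ((card_eq_one.mp hS ▸ hx : x ∈ (⊥ : Subgroup G))) hx1

theorem exists_sylow_p_mem (hpq : p < q) (hcard : Nat.card G = p * q ^ 2)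
    (hz : center G = ⊥) (Q : Sylow q G) {x : G} (hxQ : x ∉ (Q : Subgroup G)) :
    ∃ P : Sylow p G, x ∈ P := by
  have := sylow_q_normal hpq hcard Q
  have hxp : x ^ p ∈ (Q : Subgroup G) := sylow_q_index hpq.ne hcard Q ▸ pow_index_mem _ x
  refine Sylow.exists_mem_of_pow_eq_one (by_contra fun hxp1 ↦ hxQ ?_)
  rw [← centralizer_eq_sylow_q hpq.ne hcard hz Q hxp hxp1, mem_centralizer_singleton_iff]
  exact ((Commute.refl x).pow_right p).eq

theorem cent_eq (hpq : p < q) (hcard : Nat.card G = p * q ^ 2) (hz : center G = ⊥)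
    (Q : Sylow q G) :
    Cent G = insert ⊤ (insert (Q : Subgroup G) (Set.range ((↑) : Sylow p G → Subgroup G))) := by
  have hone : centralizer {(1 : G)} = ⊤ :=
    centralizer_eq_top_iff_subset.mpr (Set.singleton_subset_iff.mpr (one_mem _))
  have hex {ℓ : ℕ} [Fact ℓ.Prime] (S : Sylow ℓ G) (hℓ : ℓ ∣ Nat.card G) :
      (S : Subgroup G) ∈ Cent G := by
    obtain ⟨x, hx, hx1⟩ := ((S : Subgroup G).bot_or_exists_ne_one).resolve_left
      (S.ne_bot_of_dvd_card hℓ)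
    exact ⟨x, (centralizer_eq_sylow hpq hcard hz S hx hx1).symm⟩
  ext H
  constructor
  · rintro ⟨x, rfl⟩
    by_cases hx1 : x = 1
    · exact Or.inl (hx1 ▸ hone)
    by_cases hxQ : x ∈ (Q : Subgroup G)
    · exact Or.inr (Or.inl (centralizer_eq_sylow_q hpq.ne hcard hz Q hxQ hx1))
    obtain ⟨P, hxP⟩ := exists_sylow_p_mem hpq hcard hz Q hxQ
    exact Or.inr (Or.inr ⟨P, (centralizer_eq_sylow_p hpq hcard hz P hxP hx1).symm⟩)
  · rintro (rfl | rfl | ⟨P, rfl⟩)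
    · exact ⟨1, hone.symm⟩
    · exact hex Q (hcard ▸ dvd_mul_of_dvd_right (dvd_pow_self q two_ne_zero) p)
    · exact hex P (hcard ▸ dvd_mul_right p _)

theorem ncard_cent (hpq : p < q) (hcard : Nat.card G = p * q ^ 2) (hz : center G = ⊥) :
    (Cent G).ncard = q ^ 2 + 2 := by
  obtain ⟨Q⟩ : Nonempty (Sylow q G) := inferInstance
  have hpq2 : p < q ^ 2 := hpq.trans_le (Nat.le_self_pow two_ne_zero q)
  have hq2G : q ^ 2 < p * q ^ 2 := lt_mul_left (pow_pos hq.out.pos 2) hp.out.one_lt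
  have ne_of_card_ne {H K : Subgroup G} (h : Nat.card H ≠ Nat.card K) : H ≠ K :=
    fun hHK ↦ h (hHK ▸ rfl)
  have hQ : (Q : Subgroup G) ∉ Set.range ((↑) : Sylow p G → Subgroup G) := by
    rintro ⟨P, hP⟩
    refine ne_of_card_ne ?_ hP
    rw [sylow_p_card hpq.ne hcard P, sylow_q_card hpq.ne hcard Q]
    exact hpq2.ne
  have hT : ⊤ ∉ insert (Q : Subgroup G) (Set.range ((↑) : Sylow p G → Subgroup G)) := by
    rintro (hQT | ⟨P, hPT⟩)
    · refine ne_of_card_ne ?_ hQT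
      rw [card_top, hcard, sylow_q_card hpq.ne hcard Q]
      exact hq2G.ne'
    · refine ne_of_card_ne ?_ hPT
      rw [card_top, hcard, sylow_p_card hpq.ne hcard P]
      exact (hpq2.trans hq2G).ne
  rw [cent_eq hpq hcard hz Q, Set.ncard_insert_of_notMem hT, Set.ncard_insert_of_notMem hQ,
    ← Nat.card_coe_set_eq, Nat.card_range_of_injective fun _ _ ↦ Sylow.ext,
    card_sylow_p hpq hcard hz]

end OrderPrimeMulPrimeSq

theorem centralizer_eq_sylow_of_trivial_center_general
    (G : Type*) [Group G] [Finite G] (p q : ℕ)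
    (hp : p.Prime) (hq : q.Prime) (hpq : p < q)
    (hcard : Nat.card G = p * q ^ 2)
    (hz : Subgroup.center G = ⊥) :
    (∀ (ℓ : ℕ) (_ : Fact ℓ.Prime) (S : Sylow ℓ G) (x : G),
        x ∈ (S : Subgroup G) → x ≠ 1 →
        Subgroup.centralizer ({x} : Set G) = (S : Subgroup G)) ∧
    (Cent G).ncard = q ^ 2 + 2 := by
  have := Fact.mk hp
  have := Fact.mk hq
  exact ⟨fun _ _ S _ hx hx1 ↦ OrderPrimeMulPrimeSq.centralizer_eq_sylow hpq hcard hz S hx hx1,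
    OrderPrimeMulPrimeSq.ncard_cent hpq hcard hz⟩

theorem centralizer_eq_sylow_of_trivial_center
    (G : Type*) [Group G] [Finite G] (p q : ℕ)
    (hp : p.Prime) (hq : q.Prime) (hpq : p < q)
    (hcard : Nat.card G = p * q ^ 2)
    (hna : ¬ ∀ a b : G, a * b = b * a)
    (hz : Subgroup.center G = ⊥) :
    (∀ (ℓ : ℕ) (_ : Fact ℓ.Prime) (S : Sylow ℓ G) (x : G),
        x ∈ (S : Subgroup G) → x ≠ 1 →
        Subgroup.centralizer ({x} : Set G) = (S : Subgroup G)) ∧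
    (Cent G).ncard = q ^ 2 + 2 :=
  centralizer_eq_sylow_of_trivial_center_general G p q hp hq hpq hcard hz
end

section
/- Let G be a finite CA-group (every centralizer of a non-central element is abelian). If G/Z(G) is abelian, then G/Z(G) is elementary abelian (i.e., a direct sum of cyclic groups of some fixed prime order). -/
private lemma aux_dvd {G : Type*} [Group G] [Finite G]
    (hCA : ∀ x : G, x ∉ Subgroup.center G →
      ∀ a ∈ Subgroup.centralizer ({x} : Set G),
        ∀ b ∈ Subgroup.centralizer ({x} : Set G), a * b = b * a)
    (hab : ∀ a b : G ⧸ Subgroup.center G, a * b = b * a)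
    (x y : G) (hxy : x * y ≠ y * x) :
    orderOf (QuotientGroup.mk y : G ⧸ Subgroup.center G) ∣
      orderOf (QuotientGroup.mk x : G ⧸ Subgroup.center G) := by
  set Z := Subgroup.center G with hZ
  set n := orderOf (QuotientGroup.mk x : G ⧸ Z) with hn
  rw [orderOf_dvd_iff_pow_eq_one]
  by_contra hyn
  set w := (x * y) ^ n with hwdef
  have hxpow : (QuotientGroup.mk x : G ⧸ Z) ^ n = 1 := pow_orderOf_eq_one _
  have hmkw : (QuotientGroup.mk w : G ⧸ Z) = (QuotientGroup.mk y : G ⧸ Z) ^ n := by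
    have h1 : (QuotientGroup.mk w : G ⧸ Z)
        = ((QuotientGroup.mk x : G ⧸ Z) * QuotientGroup.mk y) ^ n := by
      simp [hwdef]
    rw [h1, Commute.mul_pow (hab _ _), hxpow, one_mul]
  have hwZ : w ∉ Z := by
    intro hw
    exact hyn (hmkw ▸ ((QuotientGroup.eq_one_iff w).mpr hw))
  have hzy : (QuotientGroup.mk (y ^ n) : G ⧸ Z) = QuotientGroup.mk w := by
    simpa using hmkw.symm
  have hyw : Commute y w := by
    obtain ⟨z, hz, hzeq⟩ : ∃ z ∈ Z, w = y ^ n * z :=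
      ⟨(y ^ n)⁻¹ * w, QuotientGroup.eq.mp hzy, by group⟩
    rw [hzeq]
    exact ((Commute.refl y).pow_right n).mul_right (Subgroup.mem_center_iff.mp hz y)
  have hxyw : Commute (x * y) w := (Commute.refl (x * y)).pow_right n
  have h1 : x * y ∈ Subgroup.centralizer ({w} : Set G) :=
    Subgroup.mem_centralizer_singleton_iff.mpr hxyw.eq
  have h2 : y ∈ Subgroup.centralizer ({w} : Set G) :=
    Subgroup.mem_centralizer_singleton_iff.mpr hyw.eq
  have hkey : (x * y) * y = y * (x * y) := hCA w hwZ (x * y) h1 y h2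
  apply hxy
  have : (x * y) * y = (y * x) * y := by rw [hkey, mul_assoc]
  exact mul_right_cancel this

private lemma aux_eq {G : Type*} [Group G] [Finite G]
    (hCA : ∀ x : G, x ∉ Subgroup.center G →
      ∀ a ∈ Subgroup.centralizer ({x} : Set G),
        ∀ b ∈ Subgroup.centralizer ({x} : Set G), a * b = b * a)
    (hab : ∀ a b : G ⧸ Subgroup.center G, a * b = b * a)
    (x y : G) (hxy : x * y ≠ y * x) :
    orderOf (QuotientGroup.mk y : G ⧸ Subgroup.center G) =
      orderOf (QuotientGroup.mk x : G ⧸ Subgroup.center G) :=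
  Nat.dvd_antisymm (aux_dvd hCA hab x y hxy)
    (aux_dvd hCA hab y x (fun h => hxy h.symm))

private lemma aux_all_eq {G : Type*} [Group G] [Finite G]
    (hCA : ∀ x : G, x ∉ Subgroup.center G →
      ∀ a ∈ Subgroup.centralizer ({x} : Set G),
        ∀ b ∈ Subgroup.centralizer ({x} : Set G), a * b = b * a)
    (hab : ∀ a b : G ⧸ Subgroup.center G, a * b = b * a)
    (a b : G ⧸ Subgroup.center G) (ha : a ≠ 1) (hb : b ≠ 1) :
    orderOf a = orderOf b := by
  obtain ⟨x, rfl⟩ := QuotientGroup.mk_surjective a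
  obtain ⟨y, rfl⟩ := QuotientGroup.mk_surjective b
  have hxZ : x ∉ Subgroup.center G := fun h => ha ((QuotientGroup.eq_one_iff x).mpr h)
  have hyZ : y ∉ Subgroup.center G := fun h => hb ((QuotientGroup.eq_one_iff y).mpr h)
  by_cases hc : x * y = y * x
  · -- x and y commute; find a third element not commuting with x
    obtain ⟨u, v, huZ, hvZ, huv⟩ :
        ∃ u v : G, u ∉ Subgroup.center G ∧ v ∉ Subgroup.center G ∧ u * v ≠ v * u := by
      by_contra hcon
      push_neg at hcon
      apply hxZ
      rw [Subgroup.mem_center_iff]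
      intro g
      by_cases hg : g ∈ Subgroup.center G
      · exact (Subgroup.mem_center_iff.mp hg x).symm
      · exact hcon g x hg hxZ
    have hmemu : u ∈ Subgroup.centralizer ({x} : Set G) ∨ u * x ≠ x * u := by
      by_cases h : u * x = x * u
      · exact Or.inl (Subgroup.mem_centralizer_singleton_iff.mpr (by rw [h]))
      · exact Or.inr h
    -- get c not commuting with x
    obtain ⟨c, hcx⟩ : ∃ c : G, c * x ≠ x * c := by
      by_cases h1 : u * x = x * u
      · by_cases h2 : v * x = x * v
        · exfalso
          apply huv
          exact hCA x hxZ u (Subgroup.mem_centralizer_singleton_iff.mpr (by rw [h1]))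
            v (Subgroup.mem_centralizer_singleton_iff.mpr (by rw [h2]))
        · exact ⟨v, h2⟩
      · exact ⟨u, h1⟩
    have hcy : c * y ≠ y * c := by
      intro h
      apply hcx
      exact hCA y hyZ c (Subgroup.mem_centralizer_singleton_iff.mpr (by rw [h]))
        x (Subgroup.mem_centralizer_singleton_iff.mpr (by rw [hc]))
    have e1 := aux_eq hCA hab c x hcx
    have e2 := aux_eq hCA hab c y hcy
    rw [e1, e2]
  · exact (aux_eq hCA hab y x (fun h => hc h.symm))

theorem central_quotient_elementary_abelian_of_CA
    (G : Type*) [Group G] [Finite G]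
    (hCA : ∀ x : G, x ∉ Subgroup.center G →
      ∀ a ∈ Subgroup.centralizer ({x} : Set G),
        ∀ b ∈ Subgroup.centralizer ({x} : Set G), a * b = b * a)
    (hab : ∀ a b : G ⧸ Subgroup.center G, a * b = b * a) :
    ∃ p : ℕ, p.Prime ∧ ∀ g : G ⧸ Subgroup.center G, g ≠ 1 → orderOf g = p := by
  by_cases htriv : ∀ g : G ⧸ Subgroup.center G, g = 1
  · exact ⟨2, Nat.prime_two, fun g hg => absurd (htriv g) hg⟩
  · push_neg at htriv
    obtain ⟨a, ha⟩ := htriv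
    set n := orderOf a with hn
    have hn1 : n ≠ 1 := by
      intro h
      exact ha (orderOf_eq_one_iff.mp h)
    have hnpos : 0 < n := (orderOf_pos a)
    set q := n.minFac with hq
    have hqp : q.Prime := Nat.minFac_prime hn1
    set b := a ^ (n / q) with hb
    have hdvd : q ∣ n := Nat.minFac_dvd n
    have hbq : b ^ q = 1 := by
      rw [hb, ← pow_mul, Nat.div_mul_cancel hdvd]
      exact pow_orderOf_eq_one a
    have hbne : b ≠ 1 := by
      intro h
      have hlt : n / q < n := Nat.div_lt_self hnpos hqp.one_lt
      have hpos : 0 < n / q := Nat.div_pos (Nat.minFac_le hnpos) hqp.pos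
      have := orderOf_dvd_of_pow_eq_one (h : a ^ (n / q) = 1)
      rw [← hn] at this
      exact absurd (Nat.le_of_dvd hpos this) (Nat.not_le.mpr hlt)
    have hob : orderOf b = q := by
      have hd : orderOf b ∣ q := orderOf_dvd_of_pow_eq_one hbq
      rcases (Nat.Prime.eq_one_or_self_of_dvd hqp _ hd) with h | h
      · exact absurd (orderOf_eq_one_iff.mp h) hbne
      · exact h
    exact ⟨q, hqp, fun g hg => (aux_all_eq hCA hab g b hg hbne).trans hob⟩
end

section
/- Let G be a group of order pq² with p < q primes. Then G is capable (isomorphic to H/Z(H) for some group H) if and only if Z(G) is trivial. -/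
/-! If `G ≃* H ⧸ Z(H)` and `x Z(H)` is central of order `n`, then `k ↦ ⁅x, k⁆` is a homomorphism
from `G` to the abelian group `Z(H)` whose values have order dividing `n`. Its kernel contains
`x Z(H)`, the commutator subgroup and every element of order prime to `n`, and it is all of `G`
only if `x ∈ Z(H)`. So a central element of a capable group that generates the group together with
these subgroups is trivial.

In a group of order `p q²` with nontrivial centre such an element exists: a central element of
order `p`, or else, when `p ∤ |Z(G)|`, one of order `q`. In the second case the normal subgroup
of order `q²` equals `⟨z⟩ G'`, because `G' ≤ ⟨z⟩ ≤ Z(G)` would make every commutator `⁅t, g⁆`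
with `t` of order `p` central of order dividing both `p` and `|Z(G)|`, putting `t` in the centre.
Conversely, a centreless group is its own central quotient. -/

open Subgroup
open scoped commutatorElement

theorem Nat.minFac_mul_pow_of_le {p q : ℕ} (hp : p.Prime) (hq : q.Prime) (hpq : p ≤ q) (n : ℕ) :
    (p * q ^ n).minFac = p := by
  have hne : p * q ^ n ≠ 1 := fun h => hp.ne_one (Nat.eq_one_of_mul_eq_one_right h)
  refine le_antisymm (Nat.minFac_le_of_dvd hp.two_le (dvd_mul_right p _)) ?_
  have hmin := Nat.minFac_prime hne
  rcases (Nat.Prime.dvd_mul hmin).mp (Nat.minFac_dvd _) with h | h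
  · exact ((Nat.prime_dvd_prime_iff_eq hmin hp).mp h).ge
  · exact ((Nat.prime_dvd_prime_iff_eq hmin hq).mp (hmin.dvd_of_dvd_pow h)).ge.trans' hpq

section

variable {G : Type*} [Group G]

theorem commutatorElement_mul_right_of_mem_center {a b c : G} (hc : ⁅a, c⁆ ∈ center G) :
    ⁅a, b * c⁆ = ⁅a, b⁆ * ⁅a, c⁆ := by
  rw [commutatorElement_mul_right_eq_mul_conj, mul_assoc _ b, mem_center_iff.mp hc b, ← mul_assoc,
    mul_inv_cancel_right]

theorem commutatorElement_pow_left_of_mem_center {a b : G} (hc : ⁅a, b⁆ ∈ center G) (n : ℕ) :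
    ⁅a ^ n, b⁆ = ⁅a, b⁆ ^ n := by
  induction n with
  | zero => simp
  | succ n ih =>
    rw [pow_succ', commutatorElement_mul_left_eq_conj_mul, ih, mem_center_iff.mp (pow_mem hc n) a,
      mul_inv_cancel_right, pow_succ]

theorem mem_center_of_commutator_le_center (hG : commutator G ≤ center G) {t : G} {n : ℕ}
    (ht : t ^ n = 1) (hn : n.Coprime (Nat.card (center G))) : t ∈ center G := by
  refine mem_center_iff.mpr fun g => ?_
  have hc : ⁅t, g⁆ ∈ center G := hG (commutator_mem_commutator (mem_top t) (mem_top g))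
  have hn' : ⁅t, g⁆ ^ n = 1 := by
    rw [← commutatorElement_pow_left_of_mem_center hc, ht, commutatorElement_one_left]
  have hcard : ⁅t, g⁆ ^ Nat.card (center G) = 1 :=
    congrArg Subtype.val (pow_card_eq_one' (x := (⟨_, hc⟩ : center G)))
  have h1 := pow_gcd_eq_one.mpr ⟨hn', hcard⟩
  rw [hn, pow_one, commutatorElement_eq_one_iff_mul_comm] at h1
  exact h1.symm

theorem Subgroup.mem_of_coprime_orderOf_index {N : Subgroup G} [N.Normal] {g : G}
    (h : (orderOf g).Coprime N.index) : g ∈ N := by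
  rw [← QuotientGroup.eq_one_iff, ← orderOf_eq_one_iff]
  exact Nat.eq_one_of_dvd_coprimes h (orderOf_map_dvd (QuotientGroup.mk' N) g)
    (N.index_eq_card ▸ _root_.orderOf_dvd_natCard _)

theorem Subgroup.eq_top_of_dvd_card_of_dvd_card [Finite G] {K : Subgroup G} {a b : ℕ}
    (hab : a.Coprime b) (hG : Nat.card G = a * b) (ha : a ∣ Nat.card K) (hb : b ∣ Nat.card K) :
    K = ⊤ :=
  K.eq_top_of_card_eq <|
    Nat.dvd_antisymm K.card_subgroup_dvd_card (hG ▸ hab.mul_dvd_of_dvd_of_dvd ha hb)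

end

section CenterQuotient

variable {H : Type*} [Group H] {x : H}

theorem commutatorElement_mem_center_of_mk_mem_center
    (hx : (x : H ⧸ center H) ∈ center (H ⧸ center H)) (k : H) : ⁅x, k⁆ ∈ center H := by
  rw [← QuotientGroup.eq_one_iff, ← QuotientGroup.mk'_apply, map_commutatorElement,
    commutatorElement_eq_one_iff_mul_comm]
  exact (mem_center_iff.mp hx _).symm

def centerQuotientCommutatorHom (hx : (x : H ⧸ center H) ∈ center (H ⧸ center H)) :
    H ⧸ center H →* center H :=
  QuotientGroup.lift (center H)
    { toFun := fun k => ⟨⁅x, k⁆, commutatorElement_mem_center_of_mk_mem_center hx k⟩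
      map_one' := Subtype.ext (commutatorElement_one_right x)
      map_mul' := fun _ k => Subtype.ext <| commutatorElement_mul_right_of_mem_center <|
        commutatorElement_mem_center_of_mk_mem_center hx k }
    fun _ hk => Subtype.ext <| commutatorElement_eq_one_iff_mul_comm.mpr (mem_center_iff.mp hk x)

variable (hx : (x : H ⧸ center H) ∈ center (H ⧸ center H))

theorem centerQuotientCommutatorHom_mk (k : H) :
    (centerQuotientCommutatorHom hx k : H) = ⁅x, k⁆ :=
  rfl

theorem centerQuotientCommutatorHom_mk_self : centerQuotientCommutatorHom hx x = 1 :=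
  Subtype.ext (commutatorElement_self x)

theorem centerQuotientCommutatorHom_pow_eq_one {n : ℕ} (hn : (x : H ⧸ center H) ^ n = 1)
    (g : H ⧸ center H) : centerQuotientCommutatorHom hx g ^ n = 1 := by
  obtain ⟨k, rfl⟩ := QuotientGroup.mk_surjective g
  have hxn : x ^ n ∈ center H := by rwa [← QuotientGroup.eq_one_iff, QuotientGroup.mk_pow]
  ext
  rw [SubgroupClass.coe_pow, centerQuotientCommutatorHom_mk, OneMemClass.coe_one,
    ← commutatorElement_pow_left_of_mem_center (commutatorElement_mem_center_of_mk_mem_center hx k),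
    commutatorElement_eq_one_iff_mul_comm]
  exact (mem_center_iff.mp hxn k).symm

theorem mk_eq_one_of_ker_centerQuotientCommutatorHom_eq_top
    (hker : (centerQuotientCommutatorHom hx).ker = ⊤) : (x : H ⧸ center H) = 1 := by
  rw [QuotientGroup.eq_one_iff, mem_center_iff]
  intro k
  have hk : centerQuotientCommutatorHom hx k = 1 := MonoidHom.mem_ker.mp (hker ▸ mem_top _)
  exact (commutatorElement_eq_one_iff_mul_comm.mp (congrArg Subtype.val hk)).symm

end CenterQuotient

theorem Capable.eq_one_of_mem_center {G : Type*} [Group G] (hG : Capable G) {z : G}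
    (hz : z ∈ center G)
    (htop : zpowers z ⊔ commutator G ⊔ closure {g | (orderOf z).Coprime (orderOf g)} = ⊤) :
    z = 1 := by
  obtain ⟨H, _, ⟨e⟩⟩ := hG
  obtain ⟨x, hx⟩ := QuotientGroup.mk_surjective (e z)
  have hxc : (x : H ⧸ center H) ∈ center (H ⧸ center H) := by
    rw [hx]
    exact (centerCongr e ⟨z, hz⟩).2
  set ψ := (centerQuotientCommutatorHom hxc).comp e.toMonoidHom
  have hker : ψ.ker = ⊤ := by
    refine top_unique (htop ▸ sup_le (sup_le ?_ ?_) ?_)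
    · rw [zpowers_le, MonoidHom.mem_ker, MonoidHom.comp_apply, MulEquiv.coe_toMonoidHom, ← hx]
      exact centerQuotientCommutatorHom_mk_self hxc
    · rw [_root_.commutator_def, commutator_le]
      intro a _ b _
      rw [MonoidHom.mem_ker, map_commutatorElement, commutatorElement_eq_one_iff_mul_comm]
      exact Subtype.ext (mem_center_iff.mp (ψ b).2 (ψ a))
    · refine (closure_le _).mpr fun g hg => ?_
      have hψz : ψ g ^ orderOf z = 1 := centerQuotientCommutatorHom_pow_eq_one hxc
        (by rw [hx, ← map_pow, pow_orderOf_eq_one, map_one]) _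
      have hg' : ψ g ^ orderOf g = 1 := by rw [← map_pow, pow_orderOf_eq_one, map_one]
      have h1 := pow_gcd_eq_one.mpr ⟨hψz, hg'⟩
      rwa [Nat.Coprime.gcd_eq_one hg, pow_one] at h1
  apply e.injective
  rw [map_one, ← hx]
  refine mk_eq_one_of_ker_centerQuotientCommutatorHom_eq_top hxc (eq_top_iff.mpr fun g _ => ?_)
  have hg : e.symm g ∈ ψ.ker := hker ▸ mem_top _
  simpa [ψ] using hg

theorem Capable.of_center_eq_bot {G : Type*} [Group G] [Small.{0} G] (h : center G = ⊥) :
    Capable G := by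
  let e : Shrink.{0} G ≃* G := Shrink.mulEquiv
  have hS : center (Shrink.{0} G) = ⊥ := by
    rw [← card_eq_one, Nat.card_congr (centerCongr e).toEquiv, card_eq_one, h]
  exact ⟨Shrink.{0} G, inferInstance, ⟨e.symm.trans <|
    QuotientGroup.quotientBot.symm.trans (QuotientGroup.quotientMulEquivOfEq hS.symm)⟩⟩

section OrderPQSq

variable {G : Type*} [Group G] [Finite G] {p q : ℕ}

theorem exists_normal_subgroup_card_eq_sq (hp : p.Prime) (hq : q.Prime) (hpq : p < q)
    (hcard : Nat.card G = p * q ^ 2) :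
    ∃ Q : Subgroup G, Q.Normal ∧ Nat.card Q = q ^ 2 ∧ Q.index = p := by
  have := Fact.mk hq
  obtain ⟨Q, hQ⟩ := Sylow.exists_subgroup_card_pow_prime q (hcard ▸ dvd_mul_left (q ^ 2) p)
  have hindex : Q.index = p := by
    have h := Q.card_mul_index
    rw [hQ, hcard, mul_comm p] at h
    exact Nat.eq_of_mul_eq_mul_left (pow_pos hq.pos 2) h
  refine ⟨Q, Q.normal_of_index_eq_minFac_card ?_, hQ, hindex⟩
  rw [hindex, hcard, Nat.minFac_mul_pow_of_le hp hq hpq.le]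

theorem zpowers_sup_closure_coprime_eq_top (hp : p.Prime) (hq : q.Prime) (hpq : p ≠ q)
    (hcard : Nat.card G = p * q ^ 2) {z : G} (hz : orderOf z = p) :
    zpowers z ⊔ closure {g | (orderOf z).Coprime (orderOf g)} = ⊤ := by
  have := Fact.mk hq
  obtain ⟨Q, hQ⟩ := Sylow.exists_subgroup_card_pow_prime q (hcard ▸ dvd_mul_left (q ^ 2) p)
  have hcop : p.Coprime (q ^ 2) := ((Nat.coprime_primes hp hq).mpr hpq).pow_right 2
  have hQle : Q ≤ Subgroup.closure {g | (orderOf z).Coprime (orderOf g)} := fun g hg =>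
    subset_closure (hz ▸ hcop.coprime_dvd_right (hQ ▸ Q.orderOf_dvd_natCard hg))
  refine eq_top_of_dvd_card_of_dvd_card hcop hcard ?_ ?_
  · exact hz ▸ Nat.card_zpowers z ▸ card_dvd_of_le le_sup_left
  · exact hQ ▸ card_dvd_of_le (hQle.trans le_sup_right)

theorem zpowers_sup_commutator_sup_closure_coprime_eq_top (hp : p.Prime) (hq : q.Prime)
    (hpq : p < q) (hcard : Nat.card G = p * q ^ 2) {z : G} (hzc : z ∈ center G)
    (hz : orderOf z = q) (hpZ : ¬ p ∣ Nat.card (center G)) :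
    zpowers z ⊔ commutator G ⊔ closure {g | (orderOf z).Coprime (orderOf g)} = ⊤ := by
  have := Fact.mk hp
  have hcop : p.Coprime q := (Nat.coprime_primes hp hq).mpr hpq.ne
  obtain ⟨t, ht⟩ := exists_prime_orderOf_dvd_card' p (hcard ▸ dvd_mul_right p (q ^ 2))
  obtain ⟨Q, hQn, hQ, hQi⟩ := exists_normal_subgroup_card_eq_sq hp hq hpq hcard
  have hG'Q : commutator G ≤ Q := by
    have : IsCyclic (G ⧸ Q) := isCyclic_of_prime_card (hQi ▸ Q.index_eq_card).symm
    exact Normal.quotient_commutative_iff_commutator_le.mp inferInstance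
  have hzQ : z ∈ Q := mem_of_coprime_orderOf_index (by rw [hz, hQi]; exact hcop.symm)
  have hG'z : ¬ commutator G ≤ zpowers z := fun h =>
    hpZ <| ht ▸ (center G).orderOf_dvd_natCard <| mem_center_of_commutator_le_center
      (h.trans (zpowers_le.mpr hzc)) (pow_orderOf_eq_one t) (ht ▸ hp.coprime_iff_not_dvd.mpr hpZ)
  have hMQ : zpowers z ⊔ commutator G = Q := by
    have hle : zpowers z ⊔ commutator G ≤ Q := sup_le (zpowers_le.mpr hzQ) hG'Q
    have hqM : q ∣ Nat.card ↥(zpowers z ⊔ commutator G) :=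
      hz ▸ Nat.card_zpowers z ▸ card_dvd_of_le le_sup_left
    obtain ⟨i, hi, hMi⟩ := (Nat.dvd_prime_pow hq).mp (hQ ▸ card_dvd_of_le hle)
    refine eq_of_le_of_card_ge hle ?_
    interval_cases i
    · rw [hMi, pow_zero, Nat.dvd_one] at hqM
      exact absurd hqM hq.one_lt.ne'
    · refine absurd ?_ hG'z
      rw [eq_of_le_of_card_ge (le_sup_left : zpowers z ≤ zpowers z ⊔ commutator G)
        (by rw [hMi, Nat.card_zpowers, hz, pow_one])]
      exact le_sup_right
    · rw [hMi, hQ]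
  refine eq_top_of_dvd_card_of_dvd_card (hcop.pow_right 2) hcard ?_ ?_
  · have htK : t ∈ Subgroup.closure {g | (orderOf z).Coprime (orderOf g)} :=
      subset_closure (show (orderOf z).Coprime (orderOf t) by rw [hz, ht]; exact hcop.symm)
    exact ht ▸ orderOf_dvd_natCard _ (le_sup_right (a := zpowers z ⊔ commutator G) htK)
  · exact hQ ▸ hMQ ▸ card_dvd_of_le le_sup_left

end OrderPQSq

theorem Capable.center_eq_bot_of_card_eq {G : Type*} [Group G] [Finite G] (hG : Capable G)
    {p q : ℕ} (hp : p.Prime) (hq : q.Prime) (hpq : p < q) (hcard : Nat.card G = p * q ^ 2) :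
    center G = ⊥ := by
  have := Fact.mk hp
  have := Fact.mk hq
  rw [← card_eq_one]
  by_contra hZ
  by_cases hpZ : p ∣ Nat.card (center G)
  · obtain ⟨⟨z, hzc⟩, hz⟩ := exists_prime_orderOf_dvd_card' p hpZ
    rw [Subgroup.orderOf_mk] at hz
    refine hp.one_lt.ne' (hz ▸ orderOf_eq_one_iff.mpr (hG.eq_one_of_mem_center hzc ?_))
    exact top_unique <| (zpowers_sup_closure_coprime_eq_top hp hq hpq.ne hcard hz).ge.trans
      (sup_le_sup_right le_sup_left _)
  · have hqZ : q ∣ Nat.card (center G) := by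
      obtain ⟨i, -, hi⟩ := (Nat.dvd_prime_pow hq).mp <|
        ((hp.coprime_iff_not_dvd.mpr hpZ).symm.dvd_of_dvd_mul_left
          (hcard ▸ card_subgroup_dvd_card (center G)))
      rw [hi]
      exact dvd_pow_self q fun hi0 => hZ (by rw [hi, hi0, pow_zero])
    obtain ⟨⟨z, hzc⟩, hz⟩ := exists_prime_orderOf_dvd_card' q hqZ
    rw [Subgroup.orderOf_mk] at hz
    refine hq.one_lt.ne' (hz ▸ orderOf_eq_one_iff.mpr (hG.eq_one_of_mem_center hzc ?_))
    exact zpowers_sup_commutator_sup_closure_coprime_eq_top hp hq hpq hcard hzc hz hpZ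

theorem capable_of_order_p_q_sq_iff_center_trivial
    (G : Type*) [Group G] (p q : ℕ)
    (hp : p.Prime) (hq : q.Prime) (hpq : p < q)
    (hcard : Nat.card G = p * q ^ 2) :
    Capable G ↔ Subgroup.center G = ⊥ := by
  have : Finite G :=
    Nat.finite_of_card_ne_zero (hcard ▸ Nat.mul_ne_zero hp.ne_zero (pow_ne_zero 2 hq.ne_zero))
  exact ⟨fun hG => hG.center_eq_bot_of_card_eq hp hq hpq hcard, Capable.of_center_eq_bot⟩
end

section
/- Let G be a finite non-abelian group of order p³ for a prime p. Then |Cent(G)| = p + 2. -/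
theorem card_cent_of_order_p_cubed
    (G : Type*) [Group G] [Finite G] (p : ℕ) (hp : p.Prime)
    (hcard : Nat.card G = p ^ 3)
    (hna : ¬ ∀ a b : G, a * b = b * a) :
    (Cent G).ncard = p + 2 := by
  classical
  have := Fintype.ofFinite G
  have hfact : Fact p.Prime := ⟨hp⟩
  have hp1 : 1 < p := hp.one_lt
  set Z := Subgroup.center G with hZdef
  set f : G → Subgroup G := fun x => Subgroup.centralizer {x} with hfdef
  -- card Z = p
  have hZdvd : Nat.card Z ∣ p ^ 3 := hcard ▸ Subgroup.card_subgroup_dvd_card Z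
  have hnt : Nontrivial G := by
    rcases subsingleton_or_nontrivial G with h | h
    · exact absurd (fun a b => Subsingleton.elim _ _) hna
    · exact h
  have hZnt : Nontrivial Z := IsPGroup.center_nontrivial (IsPGroup.of_card hcard)
  have hquot : Nat.card (G ⧸ Z) * Nat.card Z = p ^ 3 := by
    rw [← hcard, Subgroup.card_eq_card_quotient_mul_card_subgroup Z]
  have hcomm_of_cyc : ¬ IsCyclic (G ⧸ Z) := by
    intro hcyc
    exact hna (commutative_of_cyclic_center_quotient (QuotientGroup.mk' Z)
      (by rw [QuotientGroup.ker_mk']))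
  have hZcard : Nat.card Z = p := by
    obtain ⟨k, hk3, hk⟩ := (Nat.dvd_prime_pow hp).1 hZdvd
    have hk1 : 1 ≤ k := by
      by_contra h
      push_neg at h
      interval_cases k
      · rw [pow_zero] at hk
        exact (Finite.one_lt_card_iff_nontrivial.2 hZnt).ne' hk
    interval_cases k
    · exact hk.trans (pow_one p)
    · -- card Z = p², quotient has order p, cyclic
      exfalso
      apply hcomm_of_cyc
      have hq : Nat.card (G ⧸ Z) = p := by
        have h' := hquot
        rw [hk] at h'
        have hpos : 0 < p ^ 2 := pow_pos hp.pos 2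
        have h'' : Nat.card (G ⧸ Z) * p ^ 2 = p * p ^ 2 := by rw [h']; ring
        exact Nat.eq_of_mul_eq_mul_right hpos h''
      exact isCyclic_of_prime_card hq
    · -- card Z = p³, G abelian
      exfalso
      have : Z = ⊤ := Subgroup.eq_top_of_card_eq Z (by rw [hk, hcard])
      apply hna
      intro a b
      have hb : b ∈ Z := this ▸ Subgroup.mem_top b
      exact Subgroup.mem_center_iff.1 hb a
  -- facts about centralizers
  have hZle : ∀ x : G, Z ≤ f x := fun x => Subgroup.center_le_centralizer {x}
  have hself : ∀ x : G, x ∈ f x := fun x => Subgroup.mem_centralizer_singleton_iff.2 rfl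
  have htop_iff : ∀ x : G, f x = ⊤ ↔ x ∈ Z := by
    intro x
    constructor
    · intro h
      rw [Subgroup.mem_center_iff]
      intro g
      have : g ∈ f x := h ▸ Subgroup.mem_top g
      exact Subgroup.mem_centralizer_singleton_iff.1 this
    · intro h
      rw [eq_top_iff]
      intro g _
      exact Subgroup.mem_centralizer_singleton_iff.2
        (Subgroup.mem_center_iff.1 h g)
  have hCcard : ∀ x : G, x ∉ Z → Nat.card (f x) = p ^ 2 := by
    intro x hx
    have hdvd : Nat.card (f x) ∣ p ^ 3 := hcard ▸ Subgroup.card_subgroup_dvd_card _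
    obtain ⟨k, hk3, hk⟩ := (Nat.dvd_prime_pow hp).1 hdvd
    have hne1 : Nat.card (f x) ≠ p := by
      intro h
      have : Z = f x := Subgroup.eq_of_le_of_card_ge (hZle x) (by rw [h, hZcard])
      exact hx (this ▸ hself x)
    have hne3 : Nat.card (f x) ≠ p ^ 3 := by
      intro h
      have : f x = ⊤ := Subgroup.eq_top_of_card_eq (f x) (by rw [h, hcard])
      exact hx ((htop_iff x).1 this)
    have hdvd' : p ∣ Nat.card (f x) := hZcard ▸ Subgroup.card_dvd_of_le (hZle x)
    rw [hk] at hne1 hne3 hdvd' ⊢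
    have hk1 : 1 ≤ k := by
      rcases Nat.eq_zero_or_pos k with h | h
      · subst h; simp at hdvd'; omega
      · exact h
    interval_cases k
    · simp at hne1
    · rfl
    · simp at hne3
  -- key: for x y ∉ Z, y ∈ f x → f x = f y
  have hkey : ∀ x y : G, x ∉ Z → y ∉ Z → y ∈ f x → f x = f y := by
    intro x y hx hy hyx
    have hab := IsPGroup.commutative_of_card_eq_prime_sq (hCcard x hx)
    have hle : f x ≤ f y := by
      intro g hg
      apply Subgroup.mem_centralizer_singleton_iff.2
      have := hab ⟨g, hg⟩ ⟨y, hyx⟩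
      exact congrArg Subtype.val this
    exact Subgroup.eq_of_le_of_card_ge hle (by rw [hCcard x hx, hCcard y hy])
  have hfiber_iff : ∀ x y : G, x ∉ Z → y ∉ Z → (f y = f x ↔ y ∈ f x) := by
    intro x y hx hy
    constructor
    · intro h; exact h ▸ hself y
    · intro h; exact (hkey x y hx hy h).symm
  -- counting
  set t : Finset G := Finset.univ.filter (fun a => a ∉ Z) with htdef
  have hcardG : Fintype.card G = p ^ 3 := by rw [← Nat.card_eq_fintype_card, hcard]
  have hmemcard : ∀ (H : Subgroup G) (inst : DecidablePred (· ∈ H)),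
      (@Finset.filter _ _ inst Finset.univ).card = Nat.card H := by
    intro H inst
    rw [Nat.card_eq_fintype_card, Fintype.card_subtype]
  have htcard : t.card = p ^ 3 - p := by
    have hsplit := Finset.card_filter_add_card_filter_not
      (s := (Finset.univ : Finset G)) (p := fun a => a ∈ Z)
    rw [Finset.card_univ, hcardG, hmemcard Z _, hZcard] at hsplit
    rw [htdef]
    omega
  have hfibcard : ∀ x : G, x ∉ Z → (t.filter (fun a => f a = f x)).card = p ^ 2 - p := by
    intro x hx
    have hsplit := Finset.card_filter_add_card_filter_not
      (s := Finset.univ.filter (fun a => a ∈ f x)) (p := fun a => a ∈ Z)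
    rw [hmemcard (f x) _, hCcard x hx] at hsplit
    have h1 : (Finset.univ.filter (fun a => a ∈ f x)).filter (fun a => a ∈ Z)
        = Finset.univ.filter (fun a => a ∈ Z) := by
      ext a
      simp only [Finset.mem_filter, Finset.mem_univ, true_and, and_iff_right_iff_imp]
      exact fun h => hZle x h
    have h2 : (Finset.univ.filter (fun a => a ∈ f x)).filter (fun a => ¬ a ∈ Z)
        = t.filter (fun a => f a = f x) := by
      ext a
      simp only [htdef, Finset.mem_filter, Finset.mem_univ, true_and]
      constructor
      · rintro ⟨ha, haZ⟩
        exact ⟨haZ, (hfiber_iff x a hx haZ).2 ha⟩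
      · rintro ⟨haZ, hfa⟩
        exact ⟨(hfiber_iff x a hx haZ).1 hfa, haZ⟩
    rw [h1, hmemcard Z _, hZcard, h2] at hsplit
    omega
  -- number of centralizers of noncentral elements
  have himcard : (t.image f).card = p + 1 := by
    have hsum := Finset.card_eq_sum_card_image f t
    have : ∀ b ∈ t.image f, (t.filter (fun a => f a = b)).card = p ^ 2 - p := by
      intro b hb
      obtain ⟨x, hxt, hfx⟩ := Finset.mem_image.1 hb
      have hx : x ∉ Z := by
        rw [htdef] at hxt
        simpa using hxt
      rw [← hfx]
      exact hfibcard x hx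
    rw [Finset.sum_congr rfl this, Finset.sum_const, smul_eq_mul, htcard] at hsum
    have hpos : 0 < p ^ 2 - p := by
      have : p < p ^ 2 := by nlinarith
      omega
    have hfact : (p + 1) * (p ^ 2 - p) = p ^ 3 - p := by
      have h2 : p ≤ p ^ 2 := Nat.le_self_pow two_ne_zero p
      have h3 : p ≤ p ^ 3 := Nat.le_self_pow three_ne_zero p
      nlinarith [Nat.sub_add_cancel h2, Nat.sub_add_cancel h3]
    have : (t.image f).card * (p ^ 2 - p) = (p + 1) * (p ^ 2 - p) := by omega
    exact Nat.eq_of_mul_eq_mul_right hpos this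
  -- Cent G = insert ⊤ (image)
  have hCent : Cent G = insert ⊤ (↑(t.image f) : Set (Subgroup G)) := by
    ext H
    simp only [Cent, Set.mem_setOf_eq, Set.mem_insert_iff, Finset.coe_image,
      Set.mem_image, Finset.mem_coe]
    constructor
    · rintro ⟨x, rfl⟩
      by_cases hx : x ∈ Z
      · left; exact (htop_iff x).2 hx
      · right
        exact ⟨x, by simp [htdef, hx], rfl⟩
    · rintro (rfl | ⟨x, _, rfl⟩)
      · exact ⟨1, ((htop_iff 1).2 (Subgroup.one_mem Z)).symm⟩
      · exact ⟨x, rfl⟩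
  have htopnot : (⊤ : Subgroup G) ∉ (↑(t.image f) : Set (Subgroup G)) := by
    simp only [Finset.coe_image, Set.mem_image, Finset.mem_coe]
    rintro ⟨x, hxt, hfx⟩
    have hx : x ∉ Z := by rw [htdef] at hxt; simpa using hxt
    exact hx ((htop_iff x).1 hfx)
  rw [hCent, Set.ncard_insert_of_notMem htopnot, Set.ncard_coe_finset, himcard]
end

section
/- Let G be a group (finite or infinite) with |G/Z(G)| = p³ for a prime p. If C_G(x) has index p in G for some x, then G has no other centralizer of index p; i.e., any two element centralizers of index p in G coincide. -/
/-!
A centralizer `C = C_G(x)` of index `p` satisfies `[C : Z(G)] = p²`, and its own center contains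
both `Z(G)` and `x ∉ Z(G)`; hence `[C : Z(C)]` divides `p`, so `C/Z(C)` is cyclic and `C` is
abelian. A subgroup of prime index is maximal, so two different such centralizers `C_G(x)`,
`C_G(y)` generate `G`. Every element of `C_G(x) ∩ C_G(y)` then commutes with both abelian
subgroups, hence with all of `G`, so `Z(G)` would have index at most `p²` instead of `p³`.
-/

namespace Subgroup

variable {G : Type*} [Group G]

theorem isCoatom_of_index_prime {H : Subgroup G} (hH : H.index.Prime) : IsCoatom H := by
  refine ⟨fun hHtop => ?_, fun K hHK => ?_⟩
  · rw [hHtop, index_top] at hH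
    exact Nat.not_prime_one hH
  rcases (Nat.dvd_prime hH).mp (index_dvd_of_le hHK.le) with hK | hK
  · exact index_eq_one.mp hK
  · have hrel := relIndex_mul_index hHK.le
    rw [hK, Nat.mul_eq_right hH.ne_zero] at hrel
    exact absurd (relIndex_eq_one.mp hrel) hHK.not_ge

theorem index_dvd_of_lt_of_index_eq_sq {p : ℕ} (hp : p.Prime) {H K : Subgroup G} (hHK : H < K)
    (hH : H.index = p ^ 2) : K.index ∣ p := by
  have hmul : H.relIndex K * K.index = p ^ 2 := hH ▸ relIndex_mul_index hHK.le
  have hrel : H.relIndex K ≠ 1 := fun h => hHK.not_ge (relIndex_eq_one.mp h)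
  obtain ⟨i, hi, hKi⟩ := (Nat.dvd_prime_pow hp).mp (Dvd.intro_left _ hmul)
  interval_cases i
  · simp [hKi]
  · simp [hKi]
  · rw [hKi, Nat.mul_eq_right (pow_ne_zero 2 hp.ne_zero)] at hmul
    exact absurd hmul hrel

theorem isMulCommutative_of_index_center_dvd_prime {p : ℕ} (hp : p.Prime)
    (h : (center G).index ∣ p) : IsMulCommutative G := by
  have : Fact p.Prime := ⟨hp⟩
  have : IsCyclic (G ⧸ center G) := isCyclic_of_card_dvd_prime (index_eq_card (center G) ▸ h)
  exact isMulCommutative_of_isCyclic_quotient_center_self G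

theorem center_subgroupOf_centralizer_lt {x : G} (hx : x ∉ center G) :
    (center G).subgroupOf (centralizer {x}) < center (centralizer {x}) := by
  refine lt_of_le_of_ne (fun z hz => ?_) fun heq => ?_
  · exact mem_center_iff.mpr fun c => Subtype.ext (mem_center_iff.mp (mem_subgroupOf.mp hz) c)
  · have hxC : x ∈ centralizer {x} := mem_centralizer_singleton_iff.mpr rfl
    have hx' : (⟨x, hxC⟩ : centralizer {x}) ∈ center (centralizer {x}) :=
      mem_center_iff.mpr fun c => Subtype.ext (mem_centralizer_singleton_iff.mp c.2)
    exact hx (mem_subgroupOf.mp (heq ▸ hx'))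

theorem isMulCommutative_centralizer_of_index_eq_prime {p : ℕ} (hp : p.Prime)
    (hZ : (center G).index = p ^ 3) {x : G} (hx : (centralizer {x}).index = p) :
    IsMulCommutative (centralizer {x}) := by
  have hxZ : x ∉ center G := fun hxZ => by
    rw [centralizer_eq_top_iff_subset.mpr (Set.singleton_subset_iff.mpr hxZ), index_top] at hx
    exact hp.ne_one hx.symm
  have hrel : (center G).relIndex (centralizer {x}) = p ^ 2 := by
    have := relIndex_mul_index (center_le_centralizer ({x} : Set G))
    rw [hx, hZ, pow_succ] at this
    exact Nat.eq_of_mul_eq_mul_right hp.pos this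
  exact isMulCommutative_of_index_center_dvd_prime hp
    (index_dvd_of_lt_of_index_eq_sq hp (center_subgroupOf_centralizer_lt hxZ) hrel)

theorem inf_le_center_of_sup_eq_top {H K : Subgroup G} [IsMulCommutative H] [IsMulCommutative K]
    (hHK : H ⊔ K = ⊤) : H ⊓ K ≤ center G := by
  intro k ⟨hkH, hkK⟩
  have hsup : H ⊔ K ≤ centralizer {k} := sup_le
    (fun h hh => mem_centralizer_singleton_iff.mpr (setLike_mul_comm hh hkH))
    (fun h hh => mem_centralizer_singleton_iff.mpr (setLike_mul_comm hh hkK))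
  rw [hHK, top_le_iff, centralizer_eq_top_iff_subset] at hsup
  exact Set.singleton_subset_iff.mp hsup

end Subgroup

open Subgroup in
theorem centralizers_of_index_p_coincide
    (G : Type*) [Group G] (p : ℕ) (hp : p.Prime)
    (h : Nat.card (G ⧸ Subgroup.center G) = p ^ 3)
    (x y : G)
    (hx : (Subgroup.centralizer ({x} : Set G)).index = p)
    (hy : (Subgroup.centralizer ({y} : Set G)).index = p) :
    Subgroup.centralizer ({x} : Set G) = Subgroup.centralizer ({y} : Set G) := by
  by_contra hne
  have hZ : (center G).index = p ^ 3 := (index_eq_card _).trans h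
  have hsup := (isCoatom_of_index_prime (hx ▸ hp)).sup_eq_top_of_ne
    (isCoatom_of_index_prime (hy ▸ hp)) hne
  have hCx := isMulCommutative_centralizer_of_index_eq_prime hp hZ hx
  have hCy := isMulCommutative_centralizer_of_index_eq_prime hp hZ hy
  have hinf_ne_zero := index_inf_ne_zero (hx ▸ hp.ne_zero) (hy ▸ hp.ne_zero)
  have hle : p ^ 3 ≤ p ^ 2 := calc
    p ^ 3 = (center G).index := hZ.symm
    _ ≤ (centralizer {x} ⊓ centralizer {y}).index :=
      Nat.le_of_dvd (Nat.pos_of_ne_zero hinf_ne_zero)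
        (index_dvd_of_le (inf_le_center_of_sup_eq_top hsup))
    _ ≤ (centralizer {x}).index * (centralizer {y}).index := index_inf_le
    _ = p ^ 2 := by rw [hx, hy, sq]
  exact absurd hle (Nat.pow_lt_pow_right hp.one_lt (by norm_num)).not_ge
end
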